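/- arXiv:2512.14547 — 4 statements merged into one kernel-verified Lean document; each statement's English description precedes it below -/
import Mathlib

section
/- Let γ ∈ Ĥ_i, let d = p − 1 and let j, k, l ≥ i. Then: (a) J(j,k,l) = J(l,j,k) and J(j,k,l) ≡ −J(k,j,l) mod p; (b) J(j,k,l) = J(j+d,k,l) = J(j,k+d,l) = J(j,k,l+d); (c) J(j,k,l) ≡ J(j+1,k,l) + J(j,k+1,l) + J(j,k,l+1) mod p. -/
/-!
Setting: `p ≥ 5` prime, `K = ℚ_p(θ)` with `θ` a primitive `p`-th root of unity,
`O` the ring of integers (maximal order) of `K`, i.e. the integral closure of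
`ℤ_p` in `K`, and `𝔭` its unique maximal ideal, generated by `κ = θ - 1`,
so that `𝔭^n = κ^n · O` (also for `n : ℤ`).
-/

/-- The maximal order `O` of `K`: the integral closure of `ℤ_p` in `K`. -/
noncomputable def RO (p : ℕ) [Fact p.Prime] (K : Type) [Field K] [Algebra ℤ_[p] K] :
    Subalgebra ℤ_[p] K :=
  integralClosure ℤ_[p] K

/-- The ideal `𝔭^n = κ^n · O` (for `n : ℤ`), where `κ = θ - 1`;
membership `x ∈ 𝔭^n` is encoded as `κ^(-n) * x ∈ O`. -/
def Pp (p : ℕ) [Fact p.Prime] (K : Type) [Field K] [Algebra ℤ_[p] K]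
    (θ : K) (n : ℤ) : Submodule ℤ_[p] K where
  carrier := {x : K | (θ - 1) ^ (-n) * x ∈ RO p K}
  add_mem' := by
    intro a b ha hb
    simp only [Set.mem_setOf_eq, mul_add] at *
    exact add_mem ha hb
  zero_mem' := by
    simp only [Set.mem_setOf_eq, mul_zero]
    exact zero_mem _
  smul_mem' := by
    intro c x hx
    simp only [Set.mem_setOf_eq, Algebra.smul_def] at *
    rw [mul_left_comm]
    exact mul_mem (Subalgebra.algebraMap_mem _ c) hx

/-- `γ ∈ H_i`: (the restriction to `𝔭^i × 𝔭^i` of) `γ` is a `ℤ_p`-bilinear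
alternating map `𝔭^i × 𝔭^i → 𝔭^(2i+1)` which is `θ`-equivariant for the
diagonal action. -/
structure MemH (p : ℕ) [Fact p.Prime] (K : Type) [Field K] [Algebra ℤ_[p] K]
    (θ : K) (i : ℕ) (γ : K → K → K) : Prop where
  maps_into : ∀ x ∈ Pp p K θ i, ∀ y ∈ Pp p K θ i, γ x y ∈ Pp p K θ (2 * i + 1)
  add_left : ∀ x ∈ Pp p K θ i, ∀ x' ∈ Pp p K θ i, ∀ y ∈ Pp p K θ i,
    γ (x + x') y = γ x y + γ x' y
  add_right : ∀ x ∈ Pp p K θ i, ∀ y ∈ Pp p K θ i, ∀ y' ∈ Pp p K θ i,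
    γ x (y + y') = γ x y + γ x y'
  smul_left : ∀ (c : ℤ_[p]), ∀ x ∈ Pp p K θ i, ∀ y ∈ Pp p K θ i,
    γ (c • x) y = c • γ x y
  smul_right : ∀ (c : ℤ_[p]), ∀ x ∈ Pp p K θ i, ∀ y ∈ Pp p K θ i,
    γ x (c • y) = c • γ x y
  alternating : ∀ x ∈ Pp p K θ i, γ x x = 0
  theta_equiv : ∀ x ∈ Pp p K θ i, ∀ y ∈ Pp p K θ i, γ (θ * x) (θ * y) = θ * γ x y

/-- `γ ∈ Ĥ_i`: `γ ∈ H_i` and `γ` is surjective onto `𝔭^(2i+1)`,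
i.e. the `ℤ_p`-span of the values of `γ` on `𝔭^i ∧ 𝔭^i` is all of `𝔭^(2i+1)`. -/
structure MemHhat (p : ℕ) [Fact p.Prime] (K : Type) [Field K] [Algebra ℤ_[p] K]
    (θ : K) (i : ℕ) (γ : K → K → K) extends MemH p K θ i γ : Prop where
  surj : ∀ z ∈ Pp p K θ (2 * i + 1),
    z ∈ Submodule.span ℤ_[p] {w : K | ∃ x ∈ Pp p K θ i, ∃ y ∈ Pp p K θ i, γ x y = w}

/-- The Jacobi element `J_γ(u,v,w) = γ(γ(u∧v)∧w) + γ(γ(v∧w)∧u) + γ(γ(w∧u)∧v)`. -/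
def Jg (K : Type) [Field K] (γ : K → K → K) (u v w : K) : K :=
  γ (γ u v) w + γ (γ v w) u + γ (γ w u) v

/-- The ideal `J(γ)` of `O` generated by the Jacobi elements
`J_γ(u,v,w)` for `u, v, w ∈ 𝔭^i` (encoded as the set of `O`-linear
combinations of Jacobi elements). -/
def JIdealSet (p : ℕ) [Fact p.Prime] (K : Type) [Field K] [Algebra ℤ_[p] K]
    (θ : K) (i : ℕ) (γ : K → K → K) : Set K :=
  {z : K | ∃ (n : ℕ) (c s : Fin n → K), (∀ t, c t ∈ RO p K) ∧
    (∀ t, ∃ u ∈ Pp p K θ i, ∃ v ∈ Pp p K θ i, ∃ w ∈ Pp p K θ i, Jg K γ u v w = s t) ∧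
    z = ∑ t, c t * s t}


open Finset in
theorem eisenAux (p : ℕ) [Fact p.Prime] (K : Type) [Field K] [Algebra ℤ_[p] K]
    (θ : K) (hθ : IsPrimitiveRoot θ p) (hp5 : 5 ≤ p) (hθO : θ ∈ RO p K) :
    ∃ V ∈ RO p K, (p : K) * V = -(θ - 1) ^ (p - 1) := by
  have hp : p.Prime := Fact.out
  set κ : K := θ - 1 with hκdef
  have hκO : κ ∈ RO p K := sub_mem hθO (one_mem _)
  have hκ0 : κ ≠ 0 := sub_ne_zero.mpr (hθ.ne_one (by omega))
  have h1 : (κ + 1) ^ p = 1 := by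
    rw [hκdef, sub_add_cancel]; exact hθ.pow_eq_one
  have h2 : ∑ s ∈ range (p + 1), κ ^ s * (p.choose s : K) = 1 := by
    have := add_pow κ 1 p
    simp only [one_pow, mul_one] at this
    rw [← this, h1]
  have h3 : κ * ∑ s ∈ range p, κ ^ s * (p.choose (s + 1) : K) = 0 := by
    rw [Finset.mul_sum]
    rw [Finset.sum_range_succ' (fun s => κ ^ s * (p.choose s : K)) p] at h2
    simp only [pow_zero, Nat.choose_zero_right, Nat.cast_one, one_mul] at h2
    rw [add_eq_right] at h2
    rw [← h2]
    exact Finset.sum_congr rfl fun s _ => by ring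
  have hS : ∑ s ∈ range p, κ ^ s * (p.choose (s + 1) : K) = 0 :=
    (mul_eq_zero.mp h3).resolve_left hκ0
  have hp2 : p - 2 + 1 + 1 = p := by omega
  rw [← hp2, Finset.sum_range_succ, Finset.sum_range_succ'] at hS
  simp only [pow_zero, zero_add, Nat.choose_one_right, one_mul] at hS
  rw [hp2, Nat.choose_self, Nat.cast_one, mul_one] at hS
  have hp3 : p - 2 + 1 = p - 1 := by omega
  rw [hp3] at hS
  refine ⟨1 + ∑ s ∈ range (p - 2), ((p.choose (s + 1 + 1) / p : ℕ) : K) * κ ^ (s + 1), ?_, ?_⟩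
  · exact add_mem (one_mem _)
      (sum_mem fun s _ => mul_mem (natCast_mem _ _) (pow_mem hκO _))
  · have hsum : ∑ s ∈ range (p - 2), κ ^ (s + 1) * (p.choose (s + 1 + 1) : K)
        = (p : K) * ∑ s ∈ range (p - 2), ((p.choose (s + 1 + 1) / p : ℕ) : K) * κ ^ (s + 1) := by
      rw [Finset.mul_sum]
      refine Finset.sum_congr rfl fun s hs => ?_
      obtain ⟨c, hc⟩ := hp.dvd_choose_self (k := s + 1 + 1) (by omega)
        (by simp only [Finset.mem_range] at hs; omega)
      rw [hc, Nat.mul_div_cancel_left c hp.pos, Nat.cast_mul]; ring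
    linear_combination hS - hsum

theorem keyF1 (p : ℕ) [Fact p.Prime] (hp5 : 5 ≤ p)
    (K : Type) [Field K] [Algebra ℚ_[p] K] [Algebra ℤ_[p] K]
    [IsScalarTower ℤ_[p] ℚ_[p] K]
    (θ : K) (hθ : IsPrimitiveRoot θ p)
    (hV : ∃ V ∈ RO p K, (p : K) * V = -(θ - 1) ^ (p - 1))
    (c : ℤ) (hc : (c : K) * (θ - 1)⁻¹ ∈ RO p K) : (c : ZMod p) = 0 := by
  have hp : p.Prime := Fact.out
  rw [ZMod.intCast_zmod_eq_zero_iff_dvd]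
  by_contra hdvd
  have hnorm : ‖(c : ℤ_[p])‖ = 1 := by
    rcases lt_or_eq_of_le (PadicInt.norm_le_one (c : ℤ_[p])) with h | h
    · exact absurd ((PadicInt.norm_int_lt_one_iff_dvd c).mp h) hdvd
    · exact h
  obtain ⟨u, hu⟩ := PadicInt.isUnit_iff.mpr hnorm
  have hκ0 : (θ - 1) ≠ 0 := sub_ne_zero.mpr (hθ.ne_one (by omega))
  have hinv : (θ - 1)⁻¹ ∈ RO p K := by
    have h2 : (c : K) = algebraMap ℤ_[p] K (c : ℤ_[p]) := by rw [map_intCast]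
    have h1 : algebraMap ℤ_[p] K ↑u⁻¹ * ((c : K) * (θ - 1)⁻¹) = (θ - 1)⁻¹ := by
      rw [h2, ← hu, ← mul_assoc, ← map_mul, u.inv_mul, map_one, one_mul]
    rw [← h1]
    exact mul_mem (Subalgebra.algebraMap_mem _ _) hc
  obtain ⟨V, hVO, hVeq⟩ := hV
  have hne : (θ - 1) ^ (p - 1) ≠ 0 := pow_ne_zero _ hκ0
  have hpinv : (p : K)⁻¹ ∈ RO p K := by
    have h3 : (p : K)⁻¹ = -V * ((θ - 1) ^ (p - 1))⁻¹ :=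
      inv_eq_of_mul_eq_one_right (by
        calc (p : K) * (-V * ((θ - 1) ^ (p - 1))⁻¹)
            = -((p : K) * V) * ((θ - 1) ^ (p - 1))⁻¹ := by ring
          _ = (θ - 1) ^ (p - 1) * ((θ - 1) ^ (p - 1))⁻¹ := by rw [hVeq, neg_neg]
          _ = 1 := mul_inv_cancel₀ hne)
    rw [h3, ← inv_pow]
    exact mul_mem (neg_mem hVO) (pow_mem hinv _)
  have h5 : (p : K)⁻¹ = algebraMap ℚ_[p] K ((p : ℚ_[p])⁻¹) := by
    rw [map_inv₀, map_natCast]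
  rw [h5] at hpinv
  have h6 : IsIntegral ℤ_[p] ((p : ℚ_[p])⁻¹) :=
    IsIntegral.tower_bot_of_field hpinv
  obtain ⟨y, hy⟩ := IsIntegrallyClosed.isIntegral_iff.mp h6
  have h7 : ‖algebraMap ℤ_[p] ℚ_[p] y‖ ≤ 1 := by
    rw [PadicInt.algebraMap_apply]; exact PadicInt.norm_le_one y
  rw [hy, norm_inv, Padic.norm_p, inv_inv] at h7
  have : (1 : ℝ) < p := by exact_mod_cast (by omega : 1 < p)
  linarith

theorem stmt_11 (p : ℕ) [Fact p.Prime] (hp5 : 5 ≤ p)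
    (K : Type) [Field K] [Algebra ℚ_[p] K] [Algebra ℤ_[p] K]
    [IsScalarTower ℤ_[p] ℚ_[p] K]
    (θ : K) (hθ : IsPrimitiveRoot θ p)
    (hgen : Algebra.adjoin ℚ_[p] {θ} = ⊤)
    (i : ℕ) (γ : K → K → K) (hγ : MemHhat p K θ i γ)
    -- `ρ(j,k)` is defined by `γ(𝔭^j ∧ 𝔭^k) = 𝔭^(j+k+ρ(j,k))`
    (ρf : ℕ → ℕ → ℤ)
    (hρf : ∀ j k : ℕ, i ≤ j → i ≤ k →
      Submodule.span ℤ_[p] {w : K | ∃ x ∈ Pp p K θ j, ∃ y ∈ Pp p K θ k, γ x y = w}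
        = Pp p K θ ((j : ℤ) + k + ρf j k))
    -- the offset `ρ(γ) = min {ρ(j,k) | j, k ≥ i}`
    (ρ : ℤ) (hρ : IsLeast {z : ℤ | ∃ j k : ℕ, i ≤ j ∧ i ≤ k ∧ ρf j k = z} ρ)
    -- `a(j,k) ∈ {0,…,p-1}` is defined for `j, k ≥ i` by
    -- `γ(κ^j ∧ κ^k) ≡ a(j,k)·κ^(j+k+ρ) mod 𝔭^(j+k+ρ+1)`, and is extended to
    -- all integer arguments by periodicity `a(j+d,k) = a(j,k) = a(j,k+d)`
    (A : ℤ → ℤ → ℕ)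
    (hA : ∀ j k : ℤ, (i : ℤ) ≤ j → (i : ℤ) ≤ k → A j k < p ∧
      γ ((θ - 1) ^ j) ((θ - 1) ^ k) - (A j k : K) * (θ - 1) ^ (j + k + ρ)
        ∈ Pp p K θ (j + k + ρ + 1))
    (hAlt : ∀ j k : ℤ, A j k < p)
    (hAper : ∀ j k : ℤ, A (j + (p - 1)) k = A j k ∧ A j (k + (p - 1)) = A j k)
    -- `J(j,k,l) ∈ {0,…,p-1}` is defined by
    -- `J(j,k,l) ≡ a(j,k)a(j+k+ρ,l) + a(k,l)a(k+l+ρ,j) + a(l,j)a(l+j+ρ,k) mod p`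
    (JF : ℤ → ℤ → ℤ → ℕ)
    (hJF : ∀ j k l : ℤ, (i : ℤ) ≤ j → (i : ℤ) ≤ k → (i : ℤ) ≤ l →
      JF j k l < p ∧
      (JF j k l : ZMod p) = (A j k : ZMod p) * (A (j + k + ρ) l : ZMod p)
        + (A k l : ZMod p) * (A (k + l + ρ) j : ZMod p)
        + (A l j : ZMod p) * (A (l + j + ρ) k : ZMod p)) :
    -- (a) `J(j,k,l) = J(l,j,k)` and `J(j,k,l) ≡ -J(k,j,l) mod p`;
    -- (b) `J` is `d`-periodic in each argument;
    -- (c) `J(j,k,l) ≡ J(j+1,k,l) + J(j,k+1,l) + J(j,k,l+1) mod p`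
    (∀ j k l : ℤ, (i : ℤ) ≤ j → (i : ℤ) ≤ k → (i : ℤ) ≤ l →
      JF j k l = JF l j k ∧ (JF j k l : ZMod p) = -(JF k j l : ZMod p)) ∧
    (∀ j k l : ℤ, (i : ℤ) ≤ j → (i : ℤ) ≤ k → (i : ℤ) ≤ l →
      JF (j + (p - 1)) k l = JF j k l ∧ JF j (k + (p - 1)) l = JF j k l ∧
        JF j k (l + (p - 1)) = JF j k l) ∧
    (∀ j k l : ℤ, (i : ℤ) ≤ j → (i : ℤ) ≤ k → (i : ℤ) ≤ l →
      (JF j k l : ZMod p)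
        = (JF (j + 1) k l : ZMod p) + (JF j (k + 1) l : ZMod p)
          + (JF j k (l + 1) : ZMod p)) := by
  have hp : p.Prime := Fact.out
  haveI : NeZero p := ⟨hp.ne_zero⟩
  have hp5' : (5 : ℤ) ≤ (p : ℤ) := by exact_mod_cast hp5
  have hκ0 : (θ - 1) ≠ 0 := sub_ne_zero.mpr (hθ.ne_one (by omega))
  have hθO : θ ∈ RO p K := by
    show IsIntegral ℤ_[p] θ
    refine ⟨Polynomial.X ^ p - Polynomial.C 1, Polynomial.monic_X_pow_sub_C 1 hp.ne_zero, ?_⟩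
    simp [hθ.pow_eq_one]
  have hκO : (θ - 1) ∈ RO p K := sub_mem hθO (one_mem _)
  have hV := eisenAux p K θ hθ hp5 hθO
  have hF1 : ∀ c : ℤ, (c : K) * (θ - 1)⁻¹ ∈ RO p K → (c : ZMod p) = 0 :=
    keyF1 p hp5 K θ hθ hV
  -- extraction lemma
  have hL4 : ∀ (c m : ℤ), (c : K) * (θ - 1) ^ m ∈ Pp p K θ (m + 1) → (c : ZMod p) = 0 := by
    intro c m h
    apply hF1
    have h' : (θ - 1) ^ (-(m + 1)) * ((c : K) * (θ - 1) ^ m) ∈ RO p K := h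
    rwa [show (θ - 1) ^ (-(m + 1)) * ((c : K) * (θ - 1) ^ m) = (c : K) * (θ - 1)⁻¹ from by
      rw [mul_left_comm, ← zpow_add₀ hκ0, show (-(m + 1) + m : ℤ) = -1 by ring,
        zpow_neg_one]] at h'
  -- power membership
  have hmemP : ∀ (n m : ℤ), m ≤ n → (θ - 1) ^ n ∈ Pp p K θ m := by
    intro n m h
    show (θ - 1) ^ (-m) * (θ - 1) ^ n ∈ RO p K
    rw [← zpow_add₀ hκ0, show -m + n = ((n - m).toNat : ℤ) by omega, zpow_natCast]
    exact pow_mem hκO _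
  -- monotonicity
  have hmono : ∀ (n m : ℤ), m ≤ n → ∀ x ∈ Pp p K θ n, x ∈ Pp p K θ m := by
    intro n m h x hx
    show (θ - 1) ^ (-m) * x ∈ RO p K
    have e : (θ - 1) ^ (-m) * x = (θ - 1) ^ ((n - m).toNat) * ((θ - 1) ^ (-n) * x) := by
      rw [← mul_assoc, ← zpow_natCast (θ - 1), ← zpow_add₀ hκ0,
        show ((n - m).toNat : ℤ) + -n = -m by omega]
    rw [e]
    exact mul_mem (pow_mem hκO _) hx
  -- scaling
  have hscale : ∀ (n : ℤ), ∀ x ∈ Pp p K θ n, (θ - 1) * x ∈ Pp p K θ (n + 1) := by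
    intro n x hx
    show (θ - 1) ^ (-(n + 1)) * ((θ - 1) * x) ∈ RO p K
    have e : (θ - 1) ^ (-(n + 1)) * ((θ - 1) * x) = (θ - 1) ^ (-n) * x := by
      rw [mul_left_comm, ← mul_assoc, ← zpow_one_add₀ hκ0, show (1 + -(n + 1) : ℤ) = -n by ring]
    rw [e]
    exact hx
  -- antisymmetry of γ
  have hasym : ∀ x ∈ Pp p K θ (i : ℤ), ∀ y ∈ Pp p K θ (i : ℤ), γ x y = - γ y x := by
    intro x hx y hy
    have hxy := Submodule.add_mem _ hx hy
    have h0 := hγ.alternating (x + y) hxy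
    rw [hγ.add_left x hx y hy (x + y) hxy, hγ.add_right x hx x hx y hy,
      hγ.add_right y hy x hx y hy, hγ.alternating x hx, hγ.alternating y hy] at h0
    linear_combination h0
  -- antisymmetry of A at large arguments
  have hF2 : ∀ j k : ℤ, (i : ℤ) ≤ j → (i : ℤ) ≤ k →
      (A j k : ZMod p) = -(A k j : ZMod p) := by
    intro j k hj hk
    have hjm := hmemP j (i : ℤ) hj
    have hkm := hmemP k (i : ℤ) hk
    have h1 := (hA j k hj hk).2
    have h2 := (hA k j hk hj).2
    rw [show k + j + ρ = j + k + ρ by ring] at h2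
    have h0 : γ ((θ - 1) ^ j) ((θ - 1) ^ k) = - γ ((θ - 1) ^ k) ((θ - 1) ^ j) :=
      hasym _ hjm _ hkm
    have h3 : ((-((A j k : ℤ) + (A k j : ℤ)) : ℤ) : K) * (θ - 1) ^ (j + k + ρ)
        ∈ Pp p K θ (j + k + ρ + 1) := by
      have e : ((-((A j k : ℤ) + (A k j : ℤ)) : ℤ) : K) * (θ - 1) ^ (j + k + ρ)
          = (γ ((θ - 1) ^ j) ((θ - 1) ^ k) - (A j k : K) * (θ - 1) ^ (j + k + ρ))
            + (γ ((θ - 1) ^ k) ((θ - 1) ^ j) - (A k j : K) * (θ - 1) ^ (j + k + ρ)) := by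
        rw [h0]; push_cast; ring
      rw [e]
      exact Submodule.add_mem _ h1 h2
    have h5 := hL4 _ _ h3
    push_cast at h5
    linear_combination -h5
  -- the `star` relation at large arguments
  have hF3 : ∀ j k : ℤ, (i : ℤ) ≤ j → (i : ℤ) ≤ k →
      (A j k : ZMod p) = (A (j + 1) k : ZMod p) + (A j (k + 1) : ZMod p) := by
    intro j k hj hk
    have hjm := hmemP j (i : ℤ) hj
    have hkm := hmemP k (i : ℤ) hk
    have hj1 := hmemP (j + 1) (i : ℤ) (by omega)
    have hk1 := hmemP (k + 1) (i : ℤ) (by omega)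
    have hE : γ ((θ - 1) ^ (j + 1)) ((θ - 1) ^ k) + γ ((θ - 1) ^ j) ((θ - 1) ^ (k + 1))
        + γ ((θ - 1) ^ (j + 1)) ((θ - 1) ^ (k + 1))
        = (θ - 1) * γ ((θ - 1) ^ j) ((θ - 1) ^ k) := by
      have e1 : θ * (θ - 1) ^ j = (θ - 1) ^ j + (θ - 1) ^ (j + 1) := by
        rw [zpow_add_one₀ hκ0]; ring
      have e2 : θ * (θ - 1) ^ k = (θ - 1) ^ k + (θ - 1) ^ (k + 1) := by
        rw [zpow_add_one₀ hκ0]; ring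
      have h6 := hγ.theta_equiv _ hjm _ hkm
      rw [e1, e2] at h6
      rw [hγ.add_left _ hjm _ hj1 _ (Submodule.add_mem _ hkm hk1),
        hγ.add_right _ hjm _ hkm _ hk1, hγ.add_right _ hj1 _ hkm _ hk1] at h6
      linear_combination h6
    have h1 := (hA (j + 1) k (by omega) hk).2
    rw [show j + 1 + k + ρ = j + k + ρ + 1 by ring] at h1
    have h2 := (hA j (k + 1) hj (by omega)).2
    rw [show j + (k + 1) + ρ = j + k + ρ + 1 by ring] at h2
    have h3 : γ ((θ - 1) ^ (j + 1)) ((θ - 1) ^ (k + 1)) ∈ Pp p K θ (j + k + ρ + 1 + 1) := by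
      have h4 := (hA (j + 1) (k + 1) (by omega) (by omega)).2
      rw [show j + 1 + (k + 1) + ρ = j + k + ρ + 1 + 1 by ring] at h4
      have h5 : (A (j + 1) (k + 1) : K) * (θ - 1) ^ (j + k + ρ + 1 + 1)
          ∈ Pp p K θ (j + k + ρ + 1 + 1) := by
        show (θ - 1) ^ (-(j + k + ρ + 1 + 1)) * _ ∈ RO p K
        have e : (θ - 1) ^ (-(j + k + ρ + 1 + 1))
            * ((A (j + 1) (k + 1) : K) * (θ - 1) ^ (j + k + ρ + 1 + 1))
            = (A (j + 1) (k + 1) : K) := by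
          rw [mul_left_comm, ← zpow_add₀ hκ0,
            show -(j + k + ρ + 1 + 1) + (j + k + ρ + 1 + 1) = (0 : ℤ) by ring,
            zpow_zero, mul_one]
        rw [e]
        exact natCast_mem _ _
      have h6 := Submodule.add_mem _ (hmono _ _ (by omega) _ h4) h5
      rwa [sub_add_cancel] at h6
    have h4 : (θ - 1) * (γ ((θ - 1) ^ j) ((θ - 1) ^ k) - (A j k : K) * (θ - 1) ^ (j + k + ρ))
        ∈ Pp p K θ (j + k + ρ + 1 + 1) :=
      hscale _ _ ((hA j k hj hk).2)
    have hX : (((A (j + 1) k : ℤ) + (A j (k + 1) : ℤ) - (A j k : ℤ) : ℤ) : K)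
        * (θ - 1) ^ (j + k + ρ + 1) ∈ Pp p K θ (j + k + ρ + 1 + 1) := by
      have h7 := Submodule.sub_mem _ (Submodule.sub_mem _ (Submodule.sub_mem _ h4 h1) h2) h3
      have e : (((A (j + 1) k : ℤ) + (A j (k + 1) : ℤ) - (A j k : ℤ) : ℤ) : K)
          * (θ - 1) ^ (j + k + ρ + 1)
          = (θ - 1) * (γ ((θ - 1) ^ j) ((θ - 1) ^ k) - (A j k : K) * (θ - 1) ^ (j + k + ρ))
            - (γ ((θ - 1) ^ (j + 1)) ((θ - 1) ^ k) - (A (j + 1) k : K) * (θ - 1) ^ (j + k + ρ + 1))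
            - (γ ((θ - 1) ^ j) ((θ - 1) ^ (k + 1)) - (A j (k + 1) : K) * (θ - 1) ^ (j + k + ρ + 1))
            - γ ((θ - 1) ^ (j + 1)) ((θ - 1) ^ (k + 1)) := by
        push_cast
        rw [zpow_add_one₀ hκ0 (j + k + ρ)]
        linear_combination hE
      rw [e]
      exact h7
    have h8 := hL4 _ _ hX
    push_cast at h8
    linear_combination -h8
  -- periodicity extensions
  have hAperL : ∀ (t : ℕ) (j k : ℤ), A (j + (t : ℤ) * ((p : ℤ) - 1)) k = A j k := by
    intro t
    induction t with
    | zero => intro j k; norm_num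
    | succ n ih =>
      intro j k
      rw [show j + ((n + 1 : ℕ) : ℤ) * ((p : ℤ) - 1)
          = (j + (n : ℤ) * ((p : ℤ) - 1)) + ((p : ℤ) - 1) by push_cast; ring,
        (hAper _ _).1, ih]
  have hAperR : ∀ (t : ℕ) (j k : ℤ), A j (k + (t : ℤ) * ((p : ℤ) - 1)) = A j k := by
    intro t
    induction t with
    | zero => intro j k; norm_num
    | succ n ih =>
      intro j k
      rw [show k + ((n + 1 : ℕ) : ℤ) * ((p : ℤ) - 1)
          = (k + (n : ℤ) * ((p : ℤ) - 1)) + ((p : ℤ) - 1) by push_cast; ring,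
        (hAper _ _).2, ih]
  have hshift : ∀ j : ℤ, (i : ℤ) ≤ j + (((i : ℤ) - j).toNat : ℤ) * ((p : ℤ) - 1) := by
    intro j
    have h1 := Int.self_le_toNat ((i : ℤ) - j)
    have h2 : ((((i : ℤ) - j).toNat : ℤ)) ≤ (((i : ℤ) - j).toNat : ℤ) * ((p : ℤ) - 1) :=
      le_mul_of_one_le_right (Int.natCast_nonneg _) (by omega)
    linarith
  -- global versions
  have hanti : ∀ j k : ℤ, (A j k : ZMod p) = -(A k j : ZMod p) := by
    intro j k
    have h := hF2 (j + (((i : ℤ) - j).toNat : ℤ) * ((p : ℤ) - 1))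
      (k + (((i : ℤ) - k).toNat : ℤ) * ((p : ℤ) - 1)) (hshift j) (hshift k)
    simp only [hAperL, hAperR] at h
    exact h
  have hstar : ∀ j k : ℤ, (A j k : ZMod p) = (A (j + 1) k : ZMod p) + (A j (k + 1) : ZMod p) := by
    intro j k
    have h := hF3 (j + (((i : ℤ) - j).toNat : ℤ) * ((p : ℤ) - 1))
      (k + (((i : ℤ) - k).toNat : ℤ) * ((p : ℤ) - 1)) (hshift j) (hshift k)
    rw [show j + (((i : ℤ) - j).toNat : ℤ) * ((p : ℤ) - 1) + 1
        = (j + 1) + (((i : ℤ) - j).toNat : ℤ) * ((p : ℤ) - 1) by ring,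
      show k + (((i : ℤ) - k).toNat : ℤ) * ((p : ℤ) - 1) + 1
        = (k + 1) + (((i : ℤ) - k).toNat : ℤ) * ((p : ℤ) - 1) by ring] at h
    simp only [hAperL, hAperR] at h
    exact h
  have hnat : ∀ a b : ℕ, a < p → b < p → (a : ZMod p) = (b : ZMod p) → a = b := by
    intro a b ha hb h
    rw [← ZMod.val_cast_of_lt ha, ← ZMod.val_cast_of_lt hb, h]
  have hper1 : ∀ x y : ℤ, A (x + ((p : ℤ) - 1)) y = A x y := fun x y => (hAper x y).1
  have hper2 : ∀ x y : ℤ, A x (y + ((p : ℤ) - 1)) = A x y := fun x y => (hAper x y).2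
  refine ⟨?_, ?_, ?_⟩
  · -- part (a)
    intro j k l hj hk hl
    have e1 := hJF j k l hj hk hl
    have e2 := hJF l j k hl hj hk
    have e3 := hJF k j l hk hj hl
    constructor
    · apply hnat _ _ e1.1 e2.1
      rw [e1.2, e2.2]; ring
    · rw [e1.2, e3.2]
      rw [show k + j + ρ = j + k + ρ by ring, show j + l + ρ = l + j + ρ by ring,
        show l + k + ρ = k + l + ρ by ring]
      rw [hanti k j, hanti j l, hanti l k]
      ring
  · -- part (b)
    intro j k l hj hk hl
    refine ⟨?_, ?_, ?_⟩
    · apply hnat _ _ (hJF (j + ((p : ℤ) - 1)) k l (by omega) hk hl).1 (hJF j k l hj hk hl).1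
      rw [(hJF (j + ((p : ℤ) - 1)) k l (by omega) hk hl).2, (hJF j k l hj hk hl).2]
      rw [show j + ((p : ℤ) - 1) + k + ρ = j + k + ρ + ((p : ℤ) - 1) by ring,
        show l + (j + ((p : ℤ) - 1)) + ρ = l + j + ρ + ((p : ℤ) - 1) by ring]
      simp only [hper1, hper2]
    · apply hnat _ _ (hJF j (k + ((p : ℤ) - 1)) l hj (by omega) hl).1 (hJF j k l hj hk hl).1
      rw [(hJF j (k + ((p : ℤ) - 1)) l hj (by omega) hl).2, (hJF j k l hj hk hl).2]
      rw [show j + (k + ((p : ℤ) - 1)) + ρ = j + k + ρ + ((p : ℤ) - 1) by ring,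
        show k + ((p : ℤ) - 1) + l + ρ = k + l + ρ + ((p : ℤ) - 1) by ring]
      simp only [hper1, hper2]
    · apply hnat _ _ (hJF j k (l + ((p : ℤ) - 1)) hj hk (by omega)).1 (hJF j k l hj hk hl).1
      rw [(hJF j k (l + ((p : ℤ) - 1)) hj hk (by omega)).2, (hJF j k l hj hk hl).2]
      rw [show k + (l + ((p : ℤ) - 1)) + ρ = k + l + ρ + ((p : ℤ) - 1) by ring,
        show l + ((p : ℤ) - 1) + j + ρ = l + j + ρ + ((p : ℤ) - 1) by ring]
      simp only [hper1, hper2]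
  · -- part (c)
    intro j k l hj hk hl
    rw [(hJF j k l hj hk hl).2, (hJF (j + 1) k l (by omega) hk hl).2,
      (hJF j (k + 1) l hj (by omega) hl).2, (hJF j k (l + 1) hj hk (by omega)).2]
    rw [show j + 1 + k + ρ = j + k + ρ + 1 by ring,
      show j + (k + 1) + ρ = j + k + ρ + 1 by ring,
      show k + 1 + l + ρ = k + l + ρ + 1 by ring,
      show k + (l + 1) + ρ = k + l + ρ + 1 by ring,
      show l + (j + 1) + ρ = l + j + ρ + 1 by ring,
      show l + 1 + j + ρ = l + j + ρ + 1 by ring]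
    rw [hstar j k, hstar k l, hstar l j, hstar (j + k + ρ) l, hstar (k + l + ρ) j,
      hstar (l + j + ρ) k]
    ring
end

section
/- Let γ ∈ Ĥ_i and write c(k) = a(k+1, k) for k ≥ i. Then for all j ≥ i and all integers t > 0: a(j+t, j) ≡ Σ_{u=0}^{⌊(t−1)/2⌋} (−1)^u · C(t−u−1, u) · c(j+u) mod p, where C(n, u) denotes the binomial coefficient. -/
section Aux
variable {p : ℕ} [Fact p.Prime] {K : Type} [Field K] [Algebra ℚ_[p] K] [Algebra ℤ_[p] K]
  [IsScalarTower ℤ_[p] ℚ_[p] K] {θ : K}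

lemma theta_mem_RO (hθ : IsPrimitiveRoot θ p) : θ ∈ RO p K := by
  refine ⟨Polynomial.X ^ p - 1, ?_, ?_⟩
  · have : (1 : Polynomial ℤ_[p]) = Polynomial.C 1 := by simp
    rw [this]
    exact Polynomial.monic_X_pow_sub_C 1 (Fact.out : p.Prime).ne_zero
  · simp [hθ.pow_eq_one]

lemma kappa_ne (hθ : IsPrimitiveRoot θ p) : θ - 1 ≠ 0 :=
  sub_ne_zero.mpr (hθ.ne_one (Fact.out : p.Prime).one_lt)

lemma kappa_mem_RO (hθ : IsPrimitiveRoot θ p) : θ - 1 ∈ RO p K :=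
  sub_mem (theta_mem_RO hθ) (one_mem _)

lemma mem_Pp_iff {x : K} {n : ℤ} : x ∈ Pp p K θ n ↔ (θ - 1) ^ (-n) * x ∈ RO p K := Iff.rfl

lemma zpow_mem_Pp (hθ : IsPrimitiveRoot θ p) {m n : ℤ} (h : n ≤ m) :
    (θ - 1) ^ m ∈ Pp p K θ n := by
  rw [mem_Pp_iff, ← zpow_add₀ (kappa_ne hθ)]
  have : -n + m = ((m - n).toNat : ℤ) := by omega
  rw [this, zpow_natCast]
  exact pow_mem (kappa_mem_RO hθ) _

lemma Pp_mono (hθ : IsPrimitiveRoot θ p) {m n : ℤ} (h : n ≤ m) :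
    Pp p K θ m ≤ Pp p K θ n := by
  intro x hx
  rw [mem_Pp_iff] at hx ⊢
  have h1 : (θ - 1) ^ (-n) * x = (θ - 1) ^ (m - n) * ((θ - 1) ^ (-m) * x) := by
    rw [← mul_assoc, ← zpow_add₀ (kappa_ne hθ)]
    ring_nf
  rw [h1]
  have : m - n = ((m - n).toNat : ℤ) := by omega
  rw [this, zpow_natCast]
  exact mul_mem (pow_mem (kappa_mem_RO hθ) _) hx

lemma kappa_mul_mem_Pp (hθ : IsPrimitiveRoot θ p) {x : K} {n : ℤ} (t : ℤ)
    (h : x ∈ Pp p K θ n) : (θ - 1) ^ t * x ∈ Pp p K θ (n + t) := by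
  rw [mem_Pp_iff] at h ⊢
  have h1 : (θ - 1) ^ (-(n + t)) * ((θ - 1) ^ t * x) = (θ - 1) ^ (-n) * x := by
    rw [← mul_assoc, ← zpow_add₀ (kappa_ne hθ)]
    ring_nf
  rwa [h1]

lemma intCast_mul_mem_Pp {x : K} {n : ℤ} (m : ℤ) (h : x ∈ Pp p K θ n) :
    (m : K) * x ∈ Pp p K θ n := by
  have h1 : (m : K) * x = (m : ℤ_[p]) • x := by
    rw [Algebra.smul_def, map_intCast]
  rw [h1]
  exact Submodule.smul_mem _ _ h

set_option linter.unusedSectionVars false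

lemma inv_not_mem_RO (hθ : IsPrimitiveRoot θ p) : (θ - 1)⁻¹ ∉ RO p K := by
  intro h
  have hp : p.Prime := Fact.out
  have hθ1 : θ ≠ 1 := hθ.ne_one hp.one_lt
  -- p = ∏_{k<p-1} (1 - θ^(k+1))
  obtain ⟨d, hd⟩ : ∃ d, d + 1 = p := ⟨p - 1, by have := hp.one_lt; omega⟩
  have hθ' : IsPrimitiveRoot θ (d + 1) := hd ▸ hθ
  have hprod : ∏ k ∈ Finset.range d, (1 - θ ^ (k + 1)) = (p : K) := by
    rw [hθ'.prod_one_sub_pow_eq_order, ← hd]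
    push_cast
    ring
  -- (1 - θ)⁻¹ ∈ RO
  have hinv1 : (1 - θ)⁻¹ ∈ RO p K := by
    have : (1 - θ)⁻¹ = -(θ - 1)⁻¹ := by
      rw [← neg_sub θ 1, inv_neg]
    rw [this]
    exact neg_mem h
  -- each factor's inverse is in RO
  have hfac : ∀ k ∈ Finset.range d, (1 - θ ^ (k + 1))⁻¹ ∈ RO p K := by
    intro k hk
    rw [Finset.mem_range] at hk
    have hkp : k + 1 < p := by omega
    haveI : NeZero p := ⟨hp.ne_zero⟩
    have ha0 : ((k + 1 : ℕ) : ZMod p) ≠ 0 := by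
      rw [Ne, ZMod.natCast_eq_zero_iff]
      exact Nat.not_dvd_of_pos_of_lt (Nat.succ_pos k) hkp
    set b := (((k + 1 : ℕ) : ZMod p))⁻¹.val with hb
    have hab : (((k + 1) * b : ℕ) : ZMod p) = ((1 : ℕ) : ZMod p) := by
      push_cast
      rw [hb, ZMod.natCast_val, ZMod.cast_id]
      have := mul_inv_cancel₀ ha0
      push_cast at this ⊢
      exact this
    have hmod : ((k + 1) * b) % p = 1 % p := (ZMod.natCast_eq_natCast_iff' _ _ _).mp hab
    obtain ⟨q, hq⟩ : ∃ q, (k + 1) * b = 1 + p * q := by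
      refine ⟨(k + 1) * b / p, ?_⟩
      have h2 := Nat.mod_add_div ((k + 1) * b) p
      rw [hmod, Nat.mod_eq_of_lt hp.one_lt] at h2
      omega
    set t : K := ∑ m ∈ Finset.range b, (θ ^ (k + 1)) ^ m with ht
    have htmem : t ∈ RO p K :=
      sum_mem fun m _ => pow_mem (pow_mem (theta_mem_RO hθ) (k + 1)) m
    have hclaim : t * (1 - θ ^ (k + 1)) = 1 - θ := by
      have hg := geom_sum_mul (θ ^ (k + 1)) b
      have h2 : t * (1 - θ ^ (k + 1)) = -(t * (θ ^ (k + 1) - 1)) := by ring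
      rw [h2, ht, hg, ← pow_mul, hq]
      rw [pow_add, pow_mul, hθ.pow_eq_one, one_pow, pow_one]
      ring
    have hne : (1 : K) - θ ≠ 0 := sub_ne_zero.mpr (Ne.symm hθ1)
    have hinv : (1 - θ ^ (k + 1))⁻¹ = (1 - θ)⁻¹ * t := by
      refine inv_eq_of_mul_eq_one_left ?_
      rw [mul_assoc, hclaim, inv_mul_cancel₀ hne]
    rw [hinv]
    exact mul_mem hinv1 htmem
  -- hence p⁻¹ ∈ RO
  have hpinv : ((p : K))⁻¹ ∈ RO p K := by
    rw [← hprod, ← Finset.prod_inv_distrib]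
    exact prod_mem hfac
  -- contradiction via integrality over ℤ_p
  have heq : ((p : K))⁻¹ = algebraMap ℚ_[p] K ((p : ℚ_[p])⁻¹) := by
    rw [map_inv₀, map_natCast]
  rw [heq] at hpinv
  have hint : IsIntegral ℤ_[p] ((p : ℚ_[p])⁻¹) :=
    IsIntegral.tower_bot (algebraMap ℚ_[p] K).injective hpinv
  obtain ⟨y, hy⟩ := IsIntegrallyClosed.isIntegral_iff.mp hint
  have hpne : (p : ℚ_[p]) ≠ 0 := Nat.cast_ne_zero.mpr hp.ne_zero
  have hyp : y * (p : ℤ_[p]) = 1 := by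
    have h1 : ((y * (p : ℤ_[p]) : ℤ_[p]) : ℚ_[p]) = ((1 : ℤ_[p]) : ℚ_[p]) := by
      push_cast
      have hyy : (y : ℚ_[p]) = (p : ℚ_[p])⁻¹ := hy
      rw [hyy, inv_mul_cancel₀ hpne]
    exact Subtype.ext h1
  have : IsUnit ((p : ℤ_[p])) := IsUnit.of_mul_eq_one _ (by rw [mul_comm] at hyp; exact hyp)
  rw [PadicInt.isUnit_iff, PadicInt.norm_p] at this
  have h1 : (1:ℝ) < p := by exact_mod_cast hp.one_lt
  rw [inv_eq_one] at this
  norm_num [this] at h1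

lemma keydiv (hθ : IsPrimitiveRoot θ p) (m : ℤ) (w : ℤ)
    (h : (m : K) * (θ - 1) ^ w ∈ Pp p K θ (w + 1)) : (m : ZMod p) = 0 := by
  by_contra hm
  have hdvd : ¬ ((p : ℤ) ∣ m) := fun hdv =>
    hm ((ZMod.intCast_zmod_eq_zero_iff_dvd m p).mpr hdv)
  have hmu : IsUnit (m : ℤ_[p]) := by
    rw [PadicInt.isUnit_iff]
    refine le_antisymm (PadicInt.norm_le_one _) ?_
    by_contra hlt
    push_neg at hlt
    exact hdvd ((PadicInt.norm_int_lt_one_iff_dvd m).mp hlt)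
  have h2 : (m : K) * (θ - 1)⁻¹ ∈ RO p K := by
    rw [mem_Pp_iff] at h
    have heq : (θ - 1) ^ (-(w + 1)) * ((m : K) * (θ - 1) ^ w) = (m : K) * (θ - 1)⁻¹ := by
      rw [mul_left_comm, ← zpow_add₀ (kappa_ne hθ)]
      norm_num [zpow_neg_one]
    rwa [heq] at h
  obtain ⟨u, hu⟩ := hmu
  have h3 : (θ - 1)⁻¹ ∈ RO p K := by
    have h4 := (RO p K).smul_mem h2 ((↑u⁻¹ : ℤ_[p]))
    rw [Algebra.smul_def, ← mul_assoc, ← map_intCast (algebraMap ℤ_[p] K) m,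
      ← map_mul] at h4
    have : (↑u⁻¹ : ℤ_[p]) * (m : ℤ_[p]) = 1 := by
      rw [← hu]
      exact u.inv_mul
    rwa [this, map_one, one_mul] at h4
  exact inv_not_mem_RO hθ h3

end Aux

lemma choose_vanish {t u : ℕ} (h : (t - 1) / 2 + 1 ≤ u) : (t - u - 1).choose u = 0 :=
  Nat.choose_eq_zero_of_lt (by omega)

lemma sum_trunc {R : Type*} [CommRing R] (c : ℕ → R) (t N : ℕ) (h : (t - 1) / 2 + 1 ≤ N) :
    ∑ u ∈ Finset.range N, (-1 : R) ^ u * ((t - u - 1).choose u : R) * c u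
      = ∑ u ∈ Finset.range ((t - 1) / 2 + 1), (-1 : R) ^ u * ((t - u - 1).choose u : R) * c u := by
  refine (Finset.sum_subset (Finset.range_subset_range.mpr h) ?_).symm
  intro u _ hu
  rw [Finset.mem_range, not_lt] at hu
  rw [choose_vanish hu]
  simp

lemma pascal_aux (r u : ℕ) (hu : u ≤ r + 1) :
    (r + 1 - u).choose (u + 1) = (r - u).choose (u + 1) + (r - u).choose u := by
  rcases Nat.lt_or_ge u (r + 1) with h | h
  · have h1 : r + 1 - u = (r - u) + 1 := by omega
    rw [h1, Nat.choose_succ_succ, Nat.succ_eq_add_one, Nat.add_comm]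
  · have h1 : r + 1 - u = 0 := by omega
    have h2 : r - u = 0 := by omega
    rw [h1, h2]
    obtain ⟨v, rfl⟩ : ∃ v, u = v + 1 := ⟨u - 1, by omega⟩
    simp [Nat.choose_eq_zero_of_lt]

lemma comb_step {R : Type*} [CommRing R] (c : ℕ → R) (r : ℕ) :
    (∑ u ∈ Finset.range ((r + 3 - 1) / 2 + 1),
        (-1 : R) ^ u * ((r + 3 - u - 1).choose u : R) * c u)
      = (∑ u ∈ Finset.range ((r + 2 - 1) / 2 + 1),
          (-1 : R) ^ u * ((r + 2 - u - 1).choose u : R) * c u)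
        - (∑ u ∈ Finset.range ((r + 1 - 1) / 2 + 1),
            (-1 : R) ^ u * ((r + 1 - u - 1).choose u : R) * c (u + 1)) := by
  rw [← sum_trunc c (r+3) (r+3) (by omega), ← sum_trunc c (r+2) (r+3) (by omega),
    ← sum_trunc (fun u => c (u+1)) (r+1) (r+2) (by omega)]
  rw [Finset.sum_range_succ' _ (r+2), Finset.sum_range_succ'
    (fun u => (-1:R)^u * ((r + 2 - u - 1).choose u : R) * c u) (r+2)]
  have h1 : ∀ u : ℕ, r + 3 - (u+1) - 1 = r + 1 - u := by omega
  have h2 : ∀ u : ℕ, r + 2 - (u+1) - 1 = r - u := by omega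
  have h3 : ∀ u : ℕ, r + 1 - u - 1 = r - u := by omega
  simp only [h1, h2, h3, pow_succ, pow_zero, Nat.sub_zero]
  have hsum : ∑ x ∈ Finset.range (r+2), (-1:R)^x * -1 * ((r + 1 - x).choose (x+1) : R) * c (x+1)
      = (∑ x ∈ Finset.range (r+2), (-1:R)^x * -1 * ((r - x).choose (x+1) : R) * c (x+1))
        - ∑ x ∈ Finset.range (r+2), (-1:R)^x * ((r - x).choose x : R) * c (x+1) := by
    rw [← Finset.sum_sub_distrib]
    refine Finset.sum_congr rfl ?_
    intro u hu
    rw [Finset.mem_range] at hu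
    rw [pascal_aux r u (by omega)]
    push_cast
    ring
  rw [hsum]
  simp only [Nat.choose_zero_right]
  ring

/-- Let `γ ∈ Ĥ_i` and write `c(k) = a(k+1,k)` for `k ≥ i`.
Then for all `j ≥ i` and all `t > 0`:
`a(j+t,j) ≡ Σ_{u=0}^{⌊(t-1)/2⌋} (-1)^u · C(t-u-1, u) · c(j+u)  (mod p)`. -/
theorem stmt_13 (p : ℕ) [Fact p.Prime] (hp5 : 5 ≤ p)
    (K : Type) [Field K] [Algebra ℚ_[p] K] [Algebra ℤ_[p] K]
    [IsScalarTower ℤ_[p] ℚ_[p] K]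
    (θ : K) (hθ : IsPrimitiveRoot θ p)
    (hgen : Algebra.adjoin ℚ_[p] {θ} = ⊤)
    (i : ℕ) (γ : K → K → K) (hγ : MemHhat p K θ i γ)
    -- `ρ(j,k)` is defined by `γ(𝔭^j ∧ 𝔭^k) = 𝔭^(j+k+ρ(j,k))`
    (ρf : ℕ → ℕ → ℤ)
    (hρf : ∀ j k : ℕ, i ≤ j → i ≤ k →
      Submodule.span ℤ_[p] {w : K | ∃ x ∈ Pp p K θ j, ∃ y ∈ Pp p K θ k, γ x y = w}
        = Pp p K θ ((j : ℤ) + k + ρf j k))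
    -- the offset `ρ(γ) = min {ρ(j,k) | j, k ≥ i}`
    (ρ : ℤ) (hρ : IsLeast {z : ℤ | ∃ j k : ℕ, i ≤ j ∧ i ≤ k ∧ ρf j k = z} ρ)
    -- `a(j,k) ∈ {0,…,p-1}` is defined by
    -- `γ(κ^j ∧ κ^k) ≡ a(j,k)·κ^(j+k+ρ) mod 𝔭^(j+k+ρ+1)`
    (A : ℕ → ℕ → ℕ)
    (hA : ∀ j k : ℕ, i ≤ j → i ≤ k → A j k < p ∧
      γ ((θ - 1) ^ j) ((θ - 1) ^ k) - (A j k : K) * (θ - 1) ^ ((j : ℤ) + k + ρ)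
        ∈ Pp p K θ ((j : ℤ) + k + ρ + 1)) :
    -- with `c(k) = a(k+1,k)`:
    ∀ j t : ℕ, i ≤ j → 0 < t →
      (A (j + t) j : ZMod p)
        = ∑ u ∈ Finset.range ((t - 1) / 2 + 1),
            (-1 : ZMod p) ^ u * (Nat.choose (t - u - 1) u : ZMod p)
              * (A (j + u + 1) (j + u) : ZMod p) := by
  have hκne : θ - 1 ≠ 0 := kappa_ne hθ
  have hmem : ∀ j : ℕ, i ≤ j → (θ - 1) ^ j ∈ Pp p K θ i := by
    intro j hj
    rw [← zpow_natCast]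
    exact zpow_mem_Pp hθ (by exact_mod_cast hj)
  have hdiag : ∀ j : ℕ, i ≤ j → (A j j : ZMod p) = 0 := by
    intro j hj
    have h0 := (hA j j hj hj).2
    rw [hγ.toMemH.alternating _ (hmem j hj)] at h0
    have h1 : (0 : K) - (A j j : K) * (θ - 1) ^ ((j:ℤ) + j + ρ)
        = ((-(A j j : ℤ) : ℤ) : K) * (θ - 1) ^ ((j:ℤ) + j + ρ) := by push_cast; ring
    rw [h1] at h0
    have h2 := keydiv hθ (-(A j j : ℤ)) ((j:ℤ) + j + ρ) h0
    push_cast at h2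
    exact neg_eq_zero.mp h2
  have hrec : ∀ j k : ℕ, i ≤ j → i ≤ k →
      (A j k : ZMod p) = (A (j+1) k : ZMod p) + (A j (k+1) : ZMod p) := by
    intro j k hj hk
    have hj1 : i ≤ j + 1 := le_trans hj (Nat.le_succ j)
    have hk1 : i ≤ k + 1 := le_trans hk (Nat.le_succ k)
    have hmj := hmem j hj
    have hmj1 := hmem (j+1) hj1
    have hmk := hmem k hk
    have hmk1 := hmem (k+1) hk1
    have hkey : γ ((θ-1)^(j+1)) ((θ-1)^k) + γ ((θ-1)^j) ((θ-1)^(k+1))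
        + γ ((θ-1)^(j+1)) ((θ-1)^(k+1)) - (θ-1) * γ ((θ-1)^j) ((θ-1)^k) = 0 := by
      have h1 := hγ.toMemH.theta_equiv ((θ-1)^j) hmj ((θ-1)^k) hmk
      have hxj : θ * (θ-1)^j = (θ-1)^j + (θ-1)^(j+1) := by ring
      have hxk : θ * (θ-1)^k = (θ-1)^k + (θ-1)^(k+1) := by ring
      rw [hxj, hxk] at h1
      rw [hγ.toMemH.add_left _ hmj _ hmj1 _ (add_mem hmk hmk1)] at h1
      rw [hγ.toMemH.add_right _ hmj _ hmk _ hmk1,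
        hγ.toMemH.add_right _ hmj1 _ hmk _ hmk1] at h1
      linear_combination h1
    have he1 := (hA (j+1) k hj1 hk).2
    have he2 := (hA j (k+1) hj hk1).2
    have he0 := (hA j k hj hk).2
    have he3 := (hA (j+1) (k+1) hj1 hk1).2
    -- exponent rewrites
    have hz1 : (θ-1) ^ ((j:ℤ) + k + 1 + ρ) = (θ-1) ^ ((j:ℤ) + k + ρ) * (θ-1) := by
      have h : (j:ℤ) + k + 1 + ρ = ((j:ℤ) + k + ρ) + 1 := by ring
      rw [h, zpow_add_one₀ hκne]
    have hz2 : (θ-1) ^ ((((j+1):ℕ):ℤ) + (k:ℤ) + ρ) = (θ-1) ^ ((j:ℤ) + k + ρ) * (θ-1) := by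
      have h : (((j+1):ℕ):ℤ) + (k:ℤ) + ρ = ((j:ℤ) + k + ρ) + 1 := by push_cast; ring
      rw [h, zpow_add_one₀ hκne]
    have hz3 : (θ-1) ^ ((j:ℤ) + (((k+1):ℕ):ℤ) + ρ) = (θ-1) ^ ((j:ℤ) + k + ρ) * (θ-1) := by
      have h : (j:ℤ) + (((k+1):ℕ):ℤ) + ρ = ((j:ℤ) + k + ρ) + 1 := by push_cast; ring
      rw [h, zpow_add_one₀ hκne]
    -- memberships in Pp (w+1)
    have hG3 : γ ((θ-1)^(j+1)) ((θ-1)^(k+1)) ∈ Pp p K θ ((j:ℤ) + k + 1 + ρ + 1) := by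
      have hsplit : γ ((θ-1)^(j+1)) ((θ-1)^(k+1))
          = (γ ((θ-1)^(j+1)) ((θ-1)^(k+1))
              - (A (j+1) (k+1) : K) * (θ-1) ^ ((((j+1):ℕ):ℤ) + (((k+1):ℕ):ℤ) + ρ))
            + (A (j+1) (k+1) : K) * (θ-1) ^ ((((j+1):ℕ):ℤ) + (((k+1):ℕ):ℤ) + ρ) := by ring
      rw [hsplit]
      refine add_mem (Pp_mono hθ (by push_cast; omega) he3) ?_
      have hp1 : (θ-1) ^ ((((j+1):ℕ):ℤ) + (((k+1):ℕ):ℤ) + ρ)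
          ∈ Pp p K θ ((j:ℤ) + k + 1 + ρ + 1) :=
        zpow_mem_Pp hθ (by push_cast; omega)
      have h4 := intCast_mul_mem_Pp (m := (A (j+1) (k+1) : ℤ)) hp1
      push_cast at h4 ⊢
      exact h4
    have he1' : γ ((θ-1)^(j+1)) ((θ-1)^k)
        - (A (j+1) k : K) * (θ-1) ^ ((((j+1):ℕ):ℤ) + (k:ℤ) + ρ)
        ∈ Pp p K θ ((j:ℤ) + k + 1 + ρ + 1) :=
      Pp_mono hθ (by push_cast; omega) he1
    have he2' : γ ((θ-1)^j) ((θ-1)^(k+1))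
        - (A j (k+1) : K) * (θ-1) ^ ((j:ℤ) + (((k+1):ℕ):ℤ) + ρ)
        ∈ Pp p K θ ((j:ℤ) + k + 1 + ρ + 1) :=
      Pp_mono hθ (by push_cast; omega) he2
    have he0' : (θ-1) * (γ ((θ-1)^j) ((θ-1)^k) - (A j k : K) * (θ-1) ^ ((j:ℤ) + k + ρ))
        ∈ Pp p K θ ((j:ℤ) + k + 1 + ρ + 1) := by
      have h5 := kappa_mul_mem_Pp hθ 1 he0
      rw [zpow_one] at h5
      exact Pp_mono hθ (by omega) h5
    have hEq : ((((A (j+1) k : ℤ) + (A j (k+1) : ℤ) - (A j k : ℤ)) : ℤ) : K)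
          * (θ-1) ^ ((j:ℤ) + k + 1 + ρ)
        = -(γ ((θ-1)^(j+1)) ((θ-1)^(k+1)))
          - (γ ((θ-1)^(j+1)) ((θ-1)^k)
              - (A (j+1) k : K) * (θ-1) ^ ((((j+1):ℕ):ℤ) + (k:ℤ) + ρ))
          - (γ ((θ-1)^j) ((θ-1)^(k+1))
              - (A j (k+1) : K) * (θ-1) ^ ((j:ℤ) + (((k+1):ℕ):ℤ) + ρ))
          + (θ-1) * (γ ((θ-1)^j) ((θ-1)^k) - (A j k : K) * (θ-1) ^ ((j:ℤ) + k + ρ)) := by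
      rw [hz1, hz2, hz3]
      push_cast
      linear_combination hkey
    have hmemw : ((((A (j+1) k : ℤ) + (A j (k+1) : ℤ) - (A j k : ℤ)) : ℤ) : K)
        * (θ-1) ^ ((j:ℤ) + k + 1 + ρ) ∈ Pp p K θ ((j:ℤ) + k + 1 + ρ + 1) := by
      rw [hEq]
      exact add_mem (sub_mem (sub_mem (neg_mem hG3) he1') he2') he0'
    have h2 := keydiv hθ ((A (j+1) k : ℤ) + (A j (k+1) : ℤ) - (A j k : ℤ))
      ((j:ℤ) + k + 1 + ρ) hmemw
    push_cast at h2
    linear_combination -h2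
  -- main induction
  intro j t hj ht
  induction t using Nat.strong_induction_on generalizing j with
  | _ t IH =>
    match t, ht with
    | 1, _ =>
      norm_num [Finset.sum_range_one]
    | 2, _ =>
      have h1 := hrec (j+1) j (by omega) hj
      have h2 := hdiag (j+1) (by omega)
      simp only [show j+1+1 = j+2 from rfl] at h1
      norm_num [Finset.sum_range_one]
      linear_combination -h1 - h2
    | (r+3), _ =>
      have h1 := hrec (j+r+2) j (by omega) hj
      have hIH1 := IH (r+2) (by omega) j hj (by omega)
      have hIH2 := IH (r+1) (by omega) (j+1) (by omega) (by omega)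
      have hstep := comb_step (fun u => (A (j+u+1) (j+u) : ZMod p)) r
      -- reconcile index arithmetic
      have e1 : j + (r+3) = j + r + 2 + 1 := by omega
      have e2 : j + (r+2) = j + r + 2 := by omega
      have e3 : j + 1 + (r+1) = j + r + 2 := by omega
      rw [e1]
      have hIH2' : (A (j+r+2) (j+1) : ZMod p)
          = ∑ u ∈ Finset.range ((r+1-1)/2 + 1),
              (-1 : ZMod p) ^ u * ((r+1-u-1).choose u : ZMod p)
                * (A (j+(u+1)+1) (j+(u+1)) : ZMod p) := by
        rw [← e3]
        rw [hIH2]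
        refine Finset.sum_congr rfl ?_
        intro u _
        have g1 : j+1+u+1 = j+(u+1)+1 := by omega
        have g2 : j+1+u = j+(u+1) := by omega
        rw [g1, g2]
      have hIH1' : (A (j+r+2) j : ZMod p)
          = ∑ u ∈ Finset.range ((r+2-1)/2 + 1),
              (-1 : ZMod p) ^ u * ((r+2-u-1).choose u : ZMod p)
                * (A (j+u+1) (j+u) : ZMod p) := by
        rw [← e2, hIH1]
      have hfin : (A (j+r+2+1) j : ZMod p)
          = (A (j+r+2) j : ZMod p) - (A (j+r+2) (j+1) : ZMod p) := by
        linear_combination -h1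
      rw [hfin, hIH1', hIH2']
      exact hstep.symm
end

section
/- Let γ = Σ_a c_a ϑ_a ∈ Ĥ_i. Then for all x, y, z ≥ i: γ(γ(e_x ∧ e_y) ∧ e_z) + γ(γ(e_y ∧ e_z) ∧ e_x) + γ(γ(e_z ∧ e_x) ∧ e_y) = Γ_γ(x,y,z)·e_x·e_y·e_z. -/
open scoped Classical in
/-- The valuation `val : K → ℤ ∪ {∞}` with `val κ = 1`:
`val x = n` iff `x ∈ 𝔭^n \ 𝔭^(n+1)`, and `val 0 = ∞`. -/
noncomputable def valK (p : ℕ) [Fact p.Prime] (K : Type) [Field K]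
    [Algebra ℤ_[p] K] (θ : K) (x : K) : WithTop ℤ :=
  if h : ∃ z : ℤ, x ∈ Pp p K θ z ∧ x ∉ Pp p K θ (z + 1) then (h.choose : ℤ) else ⊤

/-- The map `ϑ_a(x ∧ y) = σ_a(x)σ_{1-a}(y) − σ_{1-a}(x)σ_a(y)`, for given
Galois automorphisms `σa = σ_a` and `σb = σ_{1-a}`. -/
noncomputable def vth (p : ℕ) [Fact p.Prime] (K : Type) [Field K] [Algebra ℚ_[p] K]
    (σa σb : K ≃ₐ[ℚ_[p]] K) (x y : K) : K :=
  σa x * σb y - σb x * σa y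

/-- `m_a(u,v) = ω^(u·k_a + v·l_a) ∈ ℤ_p`. -/
noncomputable def mco (p : ℕ) [Fact p.Prime] (ω : ℚ_[p]) (ka la : ℕ) (u v : ℤ) : ℚ_[p] :=
  ω ^ (u * ka + v * la)

/-- `t_a(x,y) = m_a(x,y) - m_a(y,x)`. -/
noncomputable def tco (p : ℕ) [Fact p.Prime] (ω : ℚ_[p]) (ka la : ℕ) (x y : ℤ) : ℚ_[p] :=
  mco p ω ka la x y - mco p ω ka la y x

/-- `l_{a,b}(x,y,z) = t_b(x,y)m_a(x+y,z) + t_b(y,z)m_a(y+z,x) + t_b(z,x)m_a(z+x,y)`. -/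
noncomputable def lco (p : ℕ) [Fact p.Prime] (ω : ℚ_[p]) (ka la kb lb : ℕ)
    (x y z : ℤ) : ℚ_[p] :=
  tco p ω kb lb x y * mco p ω ka la (x + y) z
    + tco p ω kb lb y z * mco p ω ka la (y + z) x
    + tco p ω kb lb z x * mco p ω ka la (z + x) y

/-- `r_{a,b}(x,y,z) = t_b(x,y)m_a(z,x+y) + t_b(y,z)m_a(x,y+z) + t_b(z,x)m_a(y,z+x)`. -/
noncomputable def rco (p : ℕ) [Fact p.Prime] (ω : ℚ_[p]) (ka la kb lb : ℕ)
    (x y z : ℤ) : ℚ_[p] :=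
  tco p ω kb lb x y * mco p ω ka la z (x + y)
    + tco p ω kb lb y z * mco p ω ka la x (y + z)
    + tco p ω kb lb z x * mco p ω ka la y (z + x)

/-- Auxiliary: the "split" form of `tco`:
`ω^(u·ka)·ω^(v·la) − ω^(v·ka)·ω^(u·la)`. -/
noncomputable def tOm (p : ℕ) [Fact p.Prime] (ω : ℚ_[p]) (ka la : ℕ) (u v : ℤ) : ℚ_[p] :=
  ω ^ (u * (ka : ℤ)) * ω ^ (v * (la : ℤ)) - ω ^ (v * (ka : ℤ)) * ω ^ (u * (la : ℤ))

/-- Let `γ = Σ_a c_a ϑ_a ∈ Ĥ_i`.  Then for all `x, y, z ≥ i`: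
`γ(γ(e_x ∧ e_y) ∧ e_z) + γ(γ(e_y ∧ e_z) ∧ e_x) + γ(γ(e_z ∧ e_x) ∧ e_y)
  = Γ_γ(x,y,z)·e_x·e_y·e_z`, where
`Γ_γ(x,y,z) = Σ_{a,b} (c_a σ_a(c_b) l_{a,b}(x,y,z) - c_a σ_{1-a}(c_b) r_{a,b}(x,y,z))`. -/
theorem stmt_17 (p : ℕ) [Fact p.Prime] (hp5 : 5 ≤ p)
    (K : Type) [Field K] [Algebra ℚ_[p] K] [Algebra ℤ_[p] K]
    [IsScalarTower ℤ_[p] ℚ_[p] K]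
    (θ : K) (hθ : IsPrimitiveRoot θ p)
    (hgen : Algebra.adjoin ℚ_[p] {θ} = ⊤)
    (r : ℕ) (hr : orderOf (r : ZMod p) = p - 1)
    (ω : ℚ_[p]) (hω : IsPrimitiveRoot ω (p - 1)) (hω1 : ‖ω‖ ≤ 1)
    (hωr : ‖ω - (r : ℚ_[p])‖ < 1)
    (σ : K ≃ₐ[ℚ_[p]] K) (hσ : σ θ = θ ^ r)
    -- for `x ∈ ℤ`, `e_x` is an eigenvector of `σ` with `val(e_x) = x`
    (e : ℤ → K)
    (he : ∀ x : ℤ, σ (e x) = algebraMap ℚ_[p] K (ω ^ x) * e x)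
    (hev : ∀ x : ℤ, valK p K θ (e x) = (x : WithTop ℤ))
    -- the Galois automorphisms `σ_a = σ^(k_a)` and `σ_{1-a} = σ^(l_a)`
    (σA σB : ℕ → (K ≃ₐ[ℚ_[p]] K)) (kf lf : ℕ → ℕ)
    (hσA : ∀ a ∈ Finset.Icc 2 ((p - 1) / 2), σA a θ = θ ^ a)
    (hσB : ∀ a ∈ Finset.Icc 2 ((p - 1) / 2), σB a θ = θ ^ ((1 : ℤ) - a))
    (hkf : ∀ a ∈ Finset.Icc 2 ((p - 1) / 2), σA a = σ ^ kf a)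
    (hlf : ∀ a ∈ Finset.Icc 2 ((p - 1) / 2), σB a = σ ^ lf a)
    -- `γ = Σ_a c_a ϑ_a ∈ Ĥ_i`
    (i : ℕ) (c : ℕ → K) (γ : K → K → K)
    (hγdef : γ = fun u v =>
      ∑ a ∈ Finset.Icc 2 ((p - 1) / 2), c a * vth p K (σA a) (σB a) u v)
    (hγ : MemHhat p K θ i γ) :
    ∀ x y z : ℤ, (i : ℤ) ≤ x → (i : ℤ) ≤ y → (i : ℤ) ≤ z →
      γ (γ (e x) (e y)) (e z) + γ (γ (e y) (e z)) (e x) + γ (γ (e z) (e x)) (e y)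
        = (∑ a ∈ Finset.Icc 2 ((p - 1) / 2), ∑ b ∈ Finset.Icc 2 ((p - 1) / 2),
            (c a * σA a (c b)
                * algebraMap ℚ_[p] K (lco p ω (kf a) (lf a) (kf b) (lf b) x y z)
              - c a * σB a (c b)
                * algebraMap ℚ_[p] K (rco p ω (kf a) (lf a) (kf b) (lf b) x y z)))
          * (e x * e y * e z) := by
  intro x y z hx hy hz
  have hpp : p.Prime := Fact.out
  have hω0 : ω ≠ 0 := hω.ne_zero (by have := hpp.two_le; omega)
  set S := Finset.Icc 2 ((p - 1) / 2) with hS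
  -- action of powers of σ on eigenvectors
  have hσpow : ∀ (k : ℕ) (u : ℤ),
      (σ ^ k) (e u) = algebraMap ℚ_[p] K (ω ^ (u * (k : ℤ))) * e u := by
    intro k
    induction k with
    | zero => intro u; simp
    | succ k ih =>
      intro u
      rw [pow_succ, AlgEquiv.mul_apply, he, map_mul, AlgEquiv.commutes, ih]
      have h1 : u * ((k + 1 : ℕ) : ℤ) = u * (k : ℤ) + u := by push_cast; ring
      rw [h1, zpow_add₀ hω0, map_mul]
      ring
  have hAe : ∀ a ∈ S, ∀ u : ℤ,
      σA a (e u) = algebraMap ℚ_[p] K (ω ^ (u * (kf a : ℤ))) * e u := by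
    intro a ha u; rw [hkf a ha, hσpow]
  have hBe : ∀ a ∈ S, ∀ u : ℤ,
      σB a (e u) = algebraMap ℚ_[p] K (ω ^ (u * (lf a : ℤ))) * e u := by
    intro a ha u; rw [hlf a ha, hσpow]
  -- first application of γ
  have hγe : ∀ u v : ℤ, γ (e u) (e v) =
      ∑ a ∈ S, c a * algebraMap ℚ_[p] K (tOm p ω (kf a) (lf a) u v) * (e u * e v) := by
    intro u v
    simp only [hγdef]
    refine Finset.sum_congr rfl fun a ha => ?_
    simp only [vth, tOm, hAe a ha, hBe a ha, map_sub, map_mul]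
    ring
  -- second application of γ
  have key : ∀ u v w : ℤ, γ (γ (e u) (e v)) (e w) =
      ∑ a ∈ S, ∑ b ∈ S,
        (c a * σA a (c b) * algebraMap ℚ_[p] K
            (tOm p ω (kf b) (lf b) u v * ω ^ ((u + v) * (kf a : ℤ)) * ω ^ (w * (lf a : ℤ)))
          - c a * σB a (c b) * algebraMap ℚ_[p] K
            (tOm p ω (kf b) (lf b) u v * ω ^ (w * (kf a : ℤ)) * ω ^ ((u + v) * (lf a : ℤ))))
          * (e u * e v * e w) := by
    intro u v w
    rw [hγe u v]
    simp only [hγdef]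
    refine Finset.sum_congr rfl fun a ha => ?_
    simp only [vth, map_sum, map_mul, AlgEquiv.commutes, hAe a ha, hBe a ha,
      Finset.sum_mul, ← Finset.sum_sub_distrib, Finset.mul_sum]
    refine Finset.sum_congr rfl fun b hb => ?_
    simp only [add_mul, zpow_add₀ hω0, map_mul, map_sub]
    ring
  rw [key x y z, key y z x, key z x y]
  simp only [Finset.sum_mul, ← Finset.sum_add_distrib]
  refine Finset.sum_congr rfl fun a ha => ?_
  refine Finset.sum_congr rfl fun b hb => ?_
  simp only [lco, rco, tco, mco, tOm, add_mul, zpow_add₀ hω0, map_mul, map_sub, map_add]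
  ring
end

section
/- Let γ = c·ϑ_a with c a unit of O and a ∈ {2,…,(p−1)/2}. Then for all x, y, z ∈ ℤ: (a) γ(γ(e_x ∧ e_y) ∧ e_z) = (t_1(x,y,z) + t_2(x,y,z))·e_x·e_y·e_z; and (b) t_1(x,y,z) ≡ c²(a^{2x}(a(1−a))^{y}(1−a)^{z} − (a(1−a))^{x}a^{2y}(1−a)^{z}) mod 𝔭 and t_2(x,y,z) ≡ c²(−(a(1−a))^{x}(1−a)^{2y}a^{z} + (1−a)^{2x}(a(1−a))^{y}a^{z}) mod 𝔭. -/
set_option linter.unusedSectionVars false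
set_option maxHeartbeats 1600000


section Helpers
open Polynomial

theorem cycloEisenstein (p : ℕ) [hp : Fact p.Prime] :
    ((cyclotomic p ℤ_[p]).comp (X + C 1)).IsEisensteinAt (Ideal.span {(p : ℤ_[p])}) := by
  have hXC : (X + 1 : ℤ[X]) = X + C 1 := by simp
  have hmap : (cyclotomic p ℤ_[p]).comp (X + C 1)
      = Polynomial.map (Int.castRingHom ℤ_[p]) ((cyclotomic p ℤ).comp (X + C 1)) := by
    rw [Polynomial.map_comp, map_cyclotomic, Polynomial.map_add, Polynomial.map_X, Polynomial.map_C]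
    norm_num
  have hmonic : ((cyclotomic p ℤ_[p]).comp (X + C 1)).Monic :=
    (cyclotomic.monic p ℤ_[p]).comp (monic_X_add_C 1) (by rw [natDegree_X_add_C]; exact one_ne_zero)
  have hdeg : ((cyclotomic p ℤ_[p]).comp (X + C 1)).natDegree = p - 1 := by
    rw [natDegree_comp, natDegree_X_add_C, mul_one, natDegree_cyclotomic,
      Nat.totient_prime hp.out]
  have hdegZ : ((cyclotomic p ℤ).comp (X + C 1)).natDegree = p - 1 := by
    rw [natDegree_comp, natDegree_X_add_C, mul_one, natDegree_cyclotomic,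
      Nat.totient_prime hp.out]
  have hpne : ((p : ℤ_[p])) ≠ 0 := Nat.cast_ne_zero.2 hp.out.ne_zero
  have hpnu : ¬ IsUnit (p : ℤ_[p]) := PadicInt.prime_p.not_unit
  have hZ := cyclotomic_comp_X_add_one_isEisensteinAt p
  rw [hXC] at hZ
  constructor
  · rw [hmonic.leadingCoeff, Ideal.mem_span_singleton]
    exact fun h => hpnu (isUnit_of_dvd_one h)
  · intro n hn
    rw [hdeg] at hn
    rw [hmap, coeff_map, Ideal.mem_span_singleton]
    have := hZ.mem (by rw [hdegZ]; exact hn)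
    rw [Ideal.submodule_span_eq, Ideal.mem_span_singleton] at this
    have h2 := map_dvd (Int.castRingHom ℤ_[p]) this
    simpa using h2
  · rw [coeff_zero_eq_eval_zero, eval_comp, eval_add, eval_X, eval_C, zero_add,
      eval_one_cyclotomic_prime, Ideal.span_singleton_pow, Ideal.mem_span_singleton]
    intro h
    rw [sq] at h
    have h3 : (p : ℤ_[p]) * p ∣ (p : ℤ_[p]) * 1 := by rwa [mul_one]
    exact hpnu (isUnit_of_dvd_one ((mul_dvd_mul_iff_left hpne).1 h3))

theorem cycloIrrQp (p : ℕ) [hp : Fact p.Prime] : Irreducible (cyclotomic p ℚ_[p]) := by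
  have hmonic : ((cyclotomic p ℤ_[p]).comp (X + C 1)).Monic :=
    (cyclotomic.monic p ℤ_[p]).comp (monic_X_add_C 1) (by rw [natDegree_X_add_C]; exact one_ne_zero)
  have hdeg : ((cyclotomic p ℤ_[p]).comp (X + C 1)).natDegree = p - 1 := by
    rw [natDegree_comp, natDegree_X_add_C, mul_one, natDegree_cyclotomic,
      Nat.totient_prime hp.out]
  have hpne : ((p : ℤ_[p])) ≠ 0 := Nat.cast_ne_zero.2 hp.out.ne_zero
  have key : Irreducible ((cyclotomic p ℤ_[p]).comp (X + C 1)) :=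
    (cycloEisenstein p).irreducible ((Ideal.span_singleton_prime hpne).2 PadicInt.prime_p)
      hmonic.isPrimitive (by rw [hdeg]; have := hp.out.two_le; omega)
  have hcomp : (algEquivAevalXAddC (1 : ℤ_[p])) (cyclotomic p ℤ_[p])
      = (cyclotomic p ℤ_[p]).comp (X + C 1) := by
    show aeval (X + C (1:ℤ_[p])) (cyclotomic p ℤ_[p]) = _
    rw [← comp_eq_aeval]
  have key2 : Irreducible (cyclotomic p ℤ_[p]) := by
    rw [← MulEquiv.irreducible_iff (algEquivAevalXAddC (1 : ℤ_[p])), hcomp]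
    exact key
  rw [← map_cyclotomic p (algebraMap ℤ_[p] ℚ_[p])]
  exact ((cyclotomic.monic p ℤ_[p]).irreducible_iff_irreducible_map_fraction_map).1 key2

theorem theta_int {p : ℕ} [hp : Fact p.Prime]
    {K : Type} [Field K] [Algebra ℤ_[p] K] {θ : K} (hθ : IsPrimitiveRoot θ p) :
    IsIntegral ℤ_[p] θ := by
  refine ⟨X ^ p - C 1, monic_X_pow_sub_C 1 hp.out.ne_zero, ?_⟩
  simp [eval₂_sub, hθ.pow_eq_one]

theorem mem_adjoin_theta {p : ℕ} [hp : Fact p.Prime] (hp5 : 5 ≤ p)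
    (K : Type) [Field K] [Algebra ℚ_[p] K] [Algebra ℤ_[p] K]
    [IsScalarTower ℤ_[p] ℚ_[p] K]
    (θ : K) (hθ : IsPrimitiveRoot θ p) (hgen : Algebra.adjoin ℚ_[p] {θ} = ⊤)
    {x : K} (hx : IsIntegral ℤ_[p] x) :
    x ∈ Algebra.adjoin ℤ_[p] ({θ} : Set K) := by
  set P : ℕ+ := ⟨p, hp.out.pos⟩ with hP
  have hθ' : IsPrimitiveRoot θ (P : ℕ) := hθ
  haveI : Fact (Nat.Prime (P : ℕ)) := hp
  have hcycl : IsCyclotomicExtension {(P : ℕ)} ℚ_[p] K := by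
    rw [IsCyclotomicExtension.iff_adjoin_eq_top]
    refine ⟨fun n hn _ => ⟨θ, by rwa [Set.mem_singleton_iff.1 hn]⟩, ?_⟩
    rw [eq_top_iff, ← hgen]
    exact Algebra.adjoin_mono (by
      intro b hb
      rw [Set.mem_singleton_iff] at hb
      exact ⟨P, Set.mem_singleton _, P.pos.ne', by rw [hb]; exact hθ.pow_eq_one⟩)
  haveI := hcycl
  haveI : FiniteDimensional ℚ_[p] K := IsCyclotomicExtension.finiteDimensional {(P : ℕ)} ℚ_[p] K
  have hirr : Irreducible (cyclotomic (P : ℕ) ℚ_[p]) := cycloIrrQp p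
  have hint : IsIntegral ℤ_[p] θ := theta_int hθ
  have hint' : IsIntegral ℤ_[p] (θ - 1) := hint.sub isIntegral_one
  -- discriminant step
  have H := Algebra.discr_mul_isIntegral_mem_adjoin ℚ_[p]
    (B := hθ'.powerBasis ℚ_[p]) (by rwa [IsPrimitiveRoot.powerBasis_gen]) hx
  rw [IsPrimitiveRoot.powerBasis_gen] at H
  have hdiscr := IsCyclotomicExtension.discr_odd_prime (K := ℚ_[p]) (L := K) hθ' hirr
    (by intro h; rw [hP] at h; have : p = 2 := h; omega)
  rw [hdiscr] at H
  have Hp : ((p : ℚ_[p]) ^ ((P : ℕ) - 2)) • x ∈ Algebra.adjoin ℤ_[p] ({θ} : Set K) := by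
    rcases Nat.even_or_odd (((P : ℕ) - 1) / 2) with he | ho
    · rwa [he.neg_one_pow, one_mul] at H
    · rw [ho.neg_one_pow, neg_one_mul, neg_smul] at H
      have H' := neg_mem H; rw [neg_neg] at H'; exact H'
  have Hz : ((p : ℤ_[p]) ^ ((P : ℕ) - 2)) • x ∈ Algebra.adjoin ℤ_[p] ({θ} : Set K) := by
    have : ((p : ℤ_[p]) ^ ((P : ℕ) - 2)) • x = ((p : ℚ_[p]) ^ ((P : ℕ) - 2)) • x := by
      rw [← algebraMap_smul ℚ_[p] ((p : ℤ_[p]) ^ ((P : ℕ) - 2)) x, map_pow, map_natCast]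
    rwa [this]
  have hadj : Algebra.adjoin ℤ_[p] ({θ} : Set K) = Algebra.adjoin ℤ_[p] ({θ - 1} : Set K) := by
    refine le_antisymm (Algebra.adjoin_le ?_) (Algebra.adjoin_le ?_) <;>
      simp only [Set.singleton_subset_iff, SetLike.mem_coe]
    · have h1 : θ - 1 ∈ Algebra.adjoin ℤ_[p] ({θ - 1} : Set K) :=
        Algebra.self_mem_adjoin_singleton _ _
      have := add_mem h1 (one_mem (Algebra.adjoin ℤ_[p] ({θ - 1} : Set K)))
      simpa using this
    · exact sub_mem (Algebra.self_mem_adjoin_singleton _ _) (one_mem _)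
  -- Eisenstein step
  have hmin : (minpoly ℤ_[p] (θ - 1)).IsEisensteinAt
      (Submodule.span ℤ_[p] {(p : ℤ_[p])}) := by
    have h₁ := minpoly.isIntegrallyClosed_eq_field_fractions' ℚ_[p] hint'
    have h₂ := hθ'.minpoly_sub_one_eq_cyclotomic_comp (K := ℚ_[p]) hirr
    have h₃ : Polynomial.map (algebraMap ℤ_[p] ℚ_[p]) ((cyclotomic p ℤ_[p]).comp (X + C 1))
        = (cyclotomic (P : ℕ) ℚ_[p]).comp (X + 1) := by
      rw [Polynomial.map_comp, map_cyclotomic, Polynomial.map_add, Polynomial.map_X,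
        Polynomial.map_C, map_one]
      norm_num
      rfl
    have heq : minpoly ℤ_[p] (θ - 1) = (cyclotomic p ℤ_[p]).comp (X + C 1) := by
      have hinj : Function.Injective (algebraMap ℤ_[p] ℚ_[p]) :=
        IsFractionRing.injective ℤ_[p] ℚ_[p]
      apply Polynomial.map_injective _ hinj
      rw [← h₁, h₂, h₃]
    rw [heq]
    have := cycloEisenstein p
    rwa [Ideal.span] at this
  rw [hadj]
  refine mem_adjoin_of_smul_prime_pow_smul_of_minpoly_isEisensteinAt
    (B := hθ'.subOnePowerBasis ℚ_[p]) (n := (P : ℕ) - 2) PadicInt.prime_p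
    (by rwa [IsPrimitiveRoot.subOnePowerBasis_gen]) hx ?_
    (by rwa [IsPrimitiveRoot.subOnePowerBasis_gen])
  rw [IsPrimitiveRoot.subOnePowerBasis_gen]
  rw [← hadj]
  exact Hz

section S
variable {p : ℕ} [hp : Fact p.Prime]
    {K : Type} [Field K] [Algebra ℚ_[p] K] [Algebra ℤ_[p] K]
    [IsScalarTower ℤ_[p] ℚ_[p] K]
    {θ : K} (hθ : IsPrimitiveRoot θ p)

theorem memPp_iff {x : K} : x ∈ Pp p K θ 1 ↔ (θ - 1)⁻¹ * x ∈ RO p K := by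
  show (θ-1) ^ (-1 : ℤ) * x ∈ RO p K ↔ _
  rw [zpow_neg_one]

include hθ

theorem hθ1 : θ ≠ 1 := hθ.ne_one hp.out.one_lt

theorem hκ0 : θ - 1 ≠ 0 := sub_ne_zero.2 (hθ1 hθ)

theorem thetaO : θ ∈ RO p K := by
  refine ⟨X ^ p - C 1, monic_X_pow_sub_C 1 hp.out.ne_zero, ?_⟩
  simp [eval₂_sub, hθ.pow_eq_one]

theorem geomP1 (j : ℕ) : θ ^ j - 1 ∈ Pp p K θ 1 := by
  rw [memPp_iff]
  have h := geom_sum_mul θ j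
  have : (θ - 1)⁻¹ * (θ ^ j - 1) = ∑ i ∈ Finset.range j, θ ^ i := by
    rw [← h, mul_comm, mul_assoc, mul_inv_cancel₀ (hκ0 hθ), mul_one]
  rw [this]
  exact Subalgebra.sum_mem _ fun i _ => pow_mem (thetaO hθ) i

omit hθ in
theorem P1_mul_O {x u : K} (hx : x ∈ Pp p K θ 1) (hu : u ∈ RO p K) :
    x * u ∈ Pp p K θ 1 := by
  rw [memPp_iff] at *
  rw [← mul_assoc]
  exact mul_mem hx hu

theorem pP1 : (p : K) ∈ Pp p K θ 1 := by
  rw [memPp_iff]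
  set E : ℤ_[p][X] := (cyclotomic p ℤ_[p]).comp (X + C 1) with hE
  have hroot : aeval (θ - 1) E = 0 := by
    rw [hE, aeval_comp]
    simp only [map_add, aeval_X, aeval_C, map_one, sub_add_cancel]
    have : aeval θ (cyclotomic p ℤ_[p]) = eval θ (cyclotomic p K) := by
      rw [aeval_def, eval₂_eq_eval_map, map_cyclotomic]
    rw [this]
    exact (hθ.isRoot_cyclotomic hp.out.pos).eq_zero
  have hc0 : E.coeff 0 = (p : ℤ_[p]) := by
    rw [hE, coeff_zero_eq_eval_zero, eval_comp, eval_add, eval_X, eval_C, zero_add,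
      eval_one_cyclotomic_prime]
  have hdvd := X_mul_divX_add E
  have := congrArg (aeval (θ - 1)) hdvd
  rw [map_add, map_mul, aeval_X, hroot, aeval_C, hc0, map_natCast] at this
  have hw : aeval (θ - 1) E.divX ∈ RO p K := by
    have hκO : (θ - 1) ∈ RO p K := sub_mem (thetaO hθ) (one_mem _)
    have h2 := aeval_algHom_apply (RO p K).val (⟨θ - 1, hκO⟩ : RO p K) E.divX
    simp only [Subalgebra.coe_val] at h2
    rw [h2]
    exact (aeval (⟨θ - 1, hκO⟩ : RO p K) E.divX).2
  have hpeq : (p : K) = -((θ - 1) * aeval (θ - 1) E.divX) := by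
    linear_combination this
  rw [hpeq]
  have h4 : (θ - 1)⁻¹ * -((θ - 1) * aeval (θ - 1) E.divX) = -aeval (θ - 1) E.divX := by
    rw [mul_neg, ← mul_assoc, inv_mul_cancel₀ (hκ0 hθ), one_mul]
  rw [h4]
  exact neg_mem hw

theorem padicP1 (q : ℤ_[p]) (h : ‖q‖ < 1) : algebraMap ℤ_[p] K q ∈ Pp p K θ 1 := by
  obtain ⟨t, rfl⟩ := (PadicInt.norm_lt_one_iff_dvd q).1 h
  rw [map_mul, map_natCast]
  exact P1_mul_O (pP1 hθ) (isIntegral_algebraMap)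

theorem intP1 (m : ℤ) (h : (p:ℤ) ∣ m) : (m : K) ∈ Pp p K θ 1 := by
  obtain ⟨t, rfl⟩ := h
  push_cast
  exact P1_mul_O (pP1 hθ) (intCast_mem (RO p K) t)

omit hθ in
theorem O_mul_P1 {x u : K} (hx : x ∈ Pp p K θ 1) (hu : u ∈ RO p K) :
    u * x ∈ Pp p K θ 1 := by
  rw [mul_comm]; exact P1_mul_O hx hu

omit hθ in
/-- product congruence -/
theorem c_mul {x x' y y' : K} (hx : x - x' ∈ Pp p K θ 1) (hy : y - y' ∈ Pp p K θ 1)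
    (hx' : x' ∈ RO p K) (hy : y ∈ RO p K) : x * y - x' * y' ∈ Pp p K θ 1 := by
  have : x * y - x' * y' = (x - x') * y + x' * (y - y') := by ring
  rw [this]
  exact add_mem (P1_mul_O ‹x - x' ∈ _› ‹y ∈ RO p K›) (O_mul_P1 ‹y - y' ∈ _› hx')

omit hθ in
theorem c_pow {x y : K} (hx : x ∈ RO p K) (hy : y ∈ RO p K)
    (h : x - y ∈ Pp p K θ 1) (n : ℕ) : x ^ n - y ^ n ∈ Pp p K θ 1 := by
  induction n with
  | zero => simpa using zero_mem _
  | succ n ih =>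
    have : x ^ (n+1) - y ^ (n+1) = (x ^ n - y ^ n) * y + x ^ n * (x - y) := by ring
    rw [this]
    exact add_mem (P1_mul_O ih hy) (O_mul_P1 h (pow_mem hx n))

omit hθ in
theorem c_zpow {x y : K} (hx : x ∈ RO p K) (hy : y ∈ RO p K)
    (hxi : x⁻¹ ∈ RO p K) (hyi : y⁻¹ ∈ RO p K)
    (hx0 : x ≠ 0) (hy0 : y ≠ 0)
    (h : x - y ∈ Pp p K θ 1) (m : ℤ) : x ^ m - y ^ m ∈ Pp p K θ 1 := by
  rcases m with n | n
  · simpa using c_pow hx hy h n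
  · rw [zpow_negSucc, zpow_negSucc]
    have key : (x ^ (n+1))⁻¹ - (y ^ (n+1))⁻¹
        = (y ^ (n+1) - x ^ (n+1)) * ((x⁻¹) ^ (n+1) * (y⁻¹) ^ (n+1)) := by
      rw [inv_pow, inv_pow, inv_sub_inv (pow_ne_zero _ hx0) (pow_ne_zero _ hy0), div_eq_mul_inv,
        mul_inv]
    rw [key]
    have h1 : y ^ (n+1) - x ^ (n+1) ∈ Pp p K θ 1 := by
      have := c_pow hx hy h (n+1)
      simpa using neg_mem this
    exact P1_mul_O h1 (mul_mem (pow_mem hxi _) (pow_mem hyi _))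

omit hθ in
theorem zpowO_mem {x : K} (hx : x ∈ RO p K) (hxi : x⁻¹ ∈ RO p K) (m : ℤ) :
    x ^ m ∈ RO p K := by
  rcases m with n | n
  · rw [Int.ofNat_eq_coe, zpow_natCast]
    exact pow_mem hx n
  · rw [zpow_negSucc, ← inv_pow]
    exact pow_mem hxi _

omit hθ in
/-- Galois automorphisms preserve the ring of integers. -/
theorem tau_mem_O (τ : K ≃ₐ[ℚ_[p]] K) {x : K} (hx : x ∈ RO p K) : τ x ∈ RO p K := by
  have hin : IsIntegral ℤ_[p] x := hx
  exact hin.map (AlgHom.restrictScalars ℤ_[p] (τ : K →ₐ[ℚ_[p]] K))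

theorem tauCongr (hp5 : 5 ≤ p) (hgen : Algebra.adjoin ℚ_[p] {θ} = ⊤)
    (τ : K ≃ₐ[ℚ_[p]] K) (hτ : τ θ - θ ∈ Pp p K θ 1)
    {x : K} (hx : x ∈ RO p K) : τ x - x ∈ Pp p K θ 1 := by
  have hadj := mem_adjoin_theta hp5 K θ hθ hgen (hx : IsIntegral ℤ_[p] x)
  have hOsub : Algebra.adjoin ℤ_[p] ({θ} : Set K) ≤ RO p K :=
    adjoin_le_integralClosure (thetaO hθ : IsIntegral ℤ_[p] θ)
  clear hx
  induction hadj using Algebra.adjoin_induction with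
  | mem u hu =>
    rw [Set.mem_singleton_iff] at hu
    rw [hu]; exact hτ
  | algebraMap r =>
    rw [IsScalarTower.algebraMap_apply ℤ_[p] ℚ_[p] K, AlgEquiv.commutes, sub_self]
    exact zero_mem _
  | add u v hu hv pu pv =>
    rw [map_add]
    have : τ u + τ v - (u + v) = (τ u - u) + (τ v - v) := by ring
    rw [this]; exact add_mem pu pv
  | mul u v hu hv pu pv =>
    rw [map_mul]
    have : τ u * τ v - u * v = τ u * (τ v - v) + (τ u - u) * v := by ring
    rw [this]
    exact add_mem (O_mul_P1 pv (tau_mem_O τ (hOsub hu))) (P1_mul_O pu (hOsub hv))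

/-- `θ^j - θ ∈ 𝔭` for `1 ≤ j`. -/
theorem thetaPowSub (j : ℕ) (hj : 1 ≤ j) : θ ^ j - θ ∈ Pp p K θ 1 := by
  have : θ ^ j - θ = θ * (θ ^ (j - 1) - 1) := by
    rw [mul_sub, mul_one, ← pow_succ']
    congr 2
    omega
  rw [this]
  exact O_mul_P1 (geomP1 hθ _) (thetaO hθ)

theorem int_unit {m : ℤ} (h : ¬ ((p:ℤ) ∣ m)) :
    (m:K) ∈ RO p K ∧ (m:K)⁻¹ ∈ RO p K ∧ (m:K) ≠ 0 := by
  have hu : IsUnit (m : ℤ_[p]) := by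
    rw [PadicInt.isUnit_iff]
    by_contra hne
    have hlt : ‖(m:ℤ_[p])‖ < 1 := lt_of_le_of_ne (PadicInt.norm_le_one _) hne
    obtain ⟨t, ht⟩ := (PadicInt.norm_lt_one_iff_dvd _).1 hlt
    apply h
    have := congrArg (PadicInt.toZMod) ht
    rw [map_mul, map_intCast, map_natCast] at this
    rw [← ZMod.intCast_zmod_eq_zero_iff_dvd]
    simp [this]
  obtain ⟨u, hu⟩ := hu
  have h1 : (m : ℤ_[p]) * ↑u⁻¹ = 1 := by rw [← hu]; exact u.mul_inv
  have h2 : (m : K) * algebraMap ℤ_[p] K ↑u⁻¹ = 1 := by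
    have := congrArg (algebraMap ℤ_[p] K) h1
    rwa [map_mul, map_one, map_intCast] at this
  refine ⟨intCast_mem (RO p K) m, ?_, ?_⟩
  · rw [inv_eq_of_mul_eq_one_right h2]
    exact isIntegral_algebraMap
  · intro h0; rw [h0, zero_mul] at h2; exact zero_ne_one h2

section Omega
omit hθ
variable (hp5 : 5 ≤ p) {ω : ℚ_[p]} (hω : IsPrimitiveRoot ω (p - 1)) (hω1 : ‖ω‖ ≤ 1)

include hp5 hω

theorem omega_ne : ω ≠ 0 := hω.ne_zero (by omega)

include hω1

theorem W_mem : algebraMap ℚ_[p] K ω ∈ RO p K := by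
  have : algebraMap ℚ_[p] K ω = algebraMap ℤ_[p] K (⟨ω, hω1⟩ : ℤ_[p]) := by
    exact (IsScalarTower.algebraMap_apply ℤ_[p] ℚ_[p] K (⟨ω, hω1⟩ : ℤ_[p])).symm
  rw [this]
  exact isIntegral_algebraMap

omit hω1

theorem W_pow_eq_one : (algebraMap ℚ_[p] K ω) ^ (p - 1) = 1 := by
  rw [← map_pow, hω.pow_eq_one, map_one]

theorem W_inv_eq : (algebraMap ℚ_[p] K ω)⁻¹ = (algebraMap ℚ_[p] K ω) ^ (p - 2) := by
  refine (inv_eq_of_mul_eq_one_right ?_)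
  rw [← pow_succ']
  have h2 : p - 2 + 1 = p - 1 := by omega
  rw [h2, W_pow_eq_one hp5 hω]

include hω1

theorem W_inv_mem : (algebraMap ℚ_[p] K ω)⁻¹ ∈ RO p K := by
  rw [W_inv_eq hp5 hω]
  exact pow_mem (W_mem hp5 hω hω1) _

omit hω1

theorem W_ne : algebraMap ℚ_[p] K ω ≠ 0 := by
  simpa using (omega_ne hp5 hω)

include hθ hω1

theorem W_sub_r {r : ℕ} (hωr : ‖ω - (r : ℚ_[p])‖ < 1) :
    algebraMap ℚ_[p] K ω - (r : K) ∈ Pp p K θ 1 := by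
  have hsub : ((r : ℤ_[p]) : ℚ_[p]) = (r : ℚ_[p]) := by push_cast; rfl
  set q : ℤ_[p] := ⟨ω, hω1⟩ - (r : ℤ_[p]) with hq
  have hcoe : (q : ℚ_[p]) = ω - (r : ℚ_[p]) := by
    rw [hq]; show ω - ((r : ℤ_[p]) : ℚ_[p]) = _; rw [hsub]
  have hqn : ‖q‖ < 1 := by rw [PadicInt.norm_def, hcoe]; exact hωr
  have h1 := padicP1 hθ q hqn
  have h2 : algebraMap ℤ_[p] K q = algebraMap ℚ_[p] K ω - (r : K) := by
    rw [IsScalarTower.algebraMap_apply ℤ_[p] ℚ_[p] K, PadicInt.algebraMap_apply, hcoe,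
      map_sub, map_natCast]
  rwa [h2] at h1
end Omega
end S

end Helpers

/-- Let `γ = c·ϑ_a` with `c` a unit of `O` and
`a ∈ {2,…,(p-1)/2}`.  Then for all `x, y, z ∈ ℤ`:
(a) `γ(γ(e_x ∧ e_y) ∧ e_z) = (t₁(x,y,z) + t₂(x,y,z))·e_x·e_y·e_z`; and
(b) `t₁(x,y,z) ≡ c²(a^{2x}(a(1-a))^y(1-a)^z - (a(1-a))^x a^{2y}(1-a)^z) mod 𝔭`
and `t₂(x,y,z) ≡ c²(-(a(1-a))^x(1-a)^{2y}a^z + (1-a)^{2x}(a(1-a))^y a^z) mod 𝔭`. -/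
theorem stmt_18 (p : ℕ) [Fact p.Prime] (hp5 : 5 ≤ p)
    (K : Type) [Field K] [Algebra ℚ_[p] K] [Algebra ℤ_[p] K]
    [IsScalarTower ℤ_[p] ℚ_[p] K]
    (θ : K) (hθ : IsPrimitiveRoot θ p)
    (hgen : Algebra.adjoin ℚ_[p] {θ} = ⊤)
    (r : ℕ) (hr : orderOf (r : ZMod p) = p - 1)
    (ω : ℚ_[p]) (hω : IsPrimitiveRoot ω (p - 1)) (hω1 : ‖ω‖ ≤ 1)
    (hωr : ‖ω - (r : ℚ_[p])‖ < 1)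
    (σ : K ≃ₐ[ℚ_[p]] K) (hσ : σ θ = θ ^ r)
    -- for `x ∈ ℤ`, `e_x` is an eigenvector of `σ` with `val(e_x) = x`
    (e : ℤ → K)
    (he : ∀ x : ℤ, σ (e x) = algebraMap ℚ_[p] K (ω ^ x) * e x)
    (hev : ∀ x : ℤ, valK p K θ (e x) = (x : WithTop ℤ))
    -- `c` is a unit of `O`, `a ∈ {2,…,(p-1)/2}`, `σ_a = σ^(k_a)`, `σ_{1-a} = σ^(l_a)`
    (c : K) (hc : c ∈ RO p K) (hcu : c ∉ Pp p K θ 1)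
    (a : ℕ) (ha2 : 2 ≤ a) (ha : a ≤ (p - 1) / 2)
    (ka la : ℕ)
    (σa : K ≃ₐ[ℚ_[p]] K) (hσa : σa θ = θ ^ a) (hka : σa = σ ^ ka)
    (σb : K ≃ₐ[ℚ_[p]] K) (hσb : σb θ = θ ^ ((1 : ℤ) - a)) (hlb : σb = σ ^ la)
    -- `γ = c·ϑ_a`
    (γ : K → K → K) (hγdef : γ = fun u v => c * vth p K σa σb u v)
    -- the quantities `t₁(x,y,z)` and `t₂(x,y,z)`
    (t1 t2 : ℤ → ℤ → ℤ → K)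
    (ht1 : ∀ x y z : ℤ, t1 x y z = c * σa c *
      algebraMap ℚ_[p] K (ω ^ (2 * (ka : ℤ) * x) * ω ^ (((ka : ℤ) + la) * y) * ω ^ ((la : ℤ) * z)
        - ω ^ (((ka : ℤ) + la) * x) * ω ^ (2 * (ka : ℤ) * y) * ω ^ ((la : ℤ) * z)))
    (ht2 : ∀ x y z : ℤ, t2 x y z = c * σb c *
      algebraMap ℚ_[p] K (-(ω ^ (((ka : ℤ) + la) * x) * ω ^ (2 * (la : ℤ) * y) * ω ^ ((ka : ℤ) * z))
        + ω ^ (2 * (la : ℤ) * x) * ω ^ (((ka : ℤ) + la) * y) * ω ^ ((ka : ℤ) * z))) :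
    ∀ x y z : ℤ,
      (γ (γ (e x) (e y)) (e z) = (t1 x y z + t2 x y z) * (e x * e y * e z)) ∧
      (t1 x y z - c ^ 2 *
          ((a : K) ^ (2 * x) * ((a : K) * (1 - (a : K))) ^ y * (1 - (a : K)) ^ z
            - ((a : K) * (1 - (a : K))) ^ x * (a : K) ^ (2 * y) * (1 - (a : K)) ^ z)
        ∈ Pp p K θ 1) ∧
      (t2 x y z - c ^ 2 *
          (-(((a : K) * (1 - (a : K))) ^ x * (1 - (a : K)) ^ (2 * y) * (a : K) ^ z)
            + (1 - (a : K)) ^ (2 * x) * ((a : K) * (1 - (a : K))) ^ y * (a : K) ^ z)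
        ∈ Pp p K θ 1) := by
  have hp' : p.Prime := Fact.out
  intro x y z
  -- ===== shared setup =====
  have hω0 : ω ≠ 0 := omega_ne hp5 hω
  set W : K := algebraMap ℚ_[p] K ω with hW
  have hW0 : W ≠ 0 := by simp [hW, hω0]
  have hθ0 : θ ≠ 0 := hθ.ne_zero hp'.ne_zero
  have hap : a < p := by have := Nat.div_le_self (p - 1) 2; omega
  -- ===== part (a) =====
  have hek : ∀ (k : ℕ) (t : ℤ), (σ ^ k) (e t) = algebraMap ℚ_[p] K (ω ^ ((k : ℤ) * t)) * e t := by
    intro k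
    induction k with
    | zero => intro t; simp
    | succ k ih =>
      intro t
      rw [pow_succ, AlgEquiv.mul_apply, he t, map_mul, AlgEquiv.commutes, ih t, ← mul_assoc,
        ← map_mul, ← zpow_add₀ hω0, show (t + (k : ℤ) * t) = ((k:ℕ)+1 : ℤ) * t by push_cast; ring]
      norm_cast
  have hax : ∀ t : ℤ, σa (e t) = algebraMap ℚ_[p] K (ω ^ ((ka : ℤ) * t)) * e t := by
    intro t; rw [hka]; exact hek ka t
  have hbx : ∀ t : ℤ, σb (e t) = algebraMap ℚ_[p] K (ω ^ ((la : ℤ) * t)) * e t := by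
    intro t; rw [hlb]; exact hek la t
  have haW : σa W = W := AlgEquiv.commutes σa ω
  have hbW : σb W = W := AlgEquiv.commutes σb ω
  have parta : γ (γ (e x) (e y)) (e z) = (t1 x y z + t2 x y z) * (e x * e y * e z) := by
    have e2 : ∀ m t : ℤ, W ^ (2*m*t) = W ^ (m*t) * W ^ (m*t) := by
      intro m t; rw [← zpow_add₀ hW0]; congr 1; ring
    have eAdd : ∀ m n t : ℤ, W ^ ((m+n)*t) = W ^ (m*t) * W ^ (n*t) := by
      intro m n t; rw [← zpow_add₀ hW0]; congr 1; ring
    rw [hγdef]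
    simp only [vth, map_mul, map_sub, hax, hbx, AlgEquiv.commutes, ht1, ht2,
      map_add, map_neg, map_zpow₀, ← hW, haW, hbW, e2, eAdd]
    ring
  -- ===== part (b) =====
  -- units
  have hpa : ¬ ((p:ℤ) ∣ (a:ℤ)) := by
    rw [Int.natCast_dvd_natCast]
    intro h; have := Nat.le_of_dvd (by omega) h; omega
  have hpb : ¬ ((p:ℤ) ∣ ((1:ℤ) - a)) := by
    intro h
    have h2 : (p:ℤ) ∣ ((a:ℤ) - 1) := (dvd_neg).1 (by simpa [neg_sub] using h)
    rw [show ((a:ℤ) - 1) = ((a - 1 : ℕ) : ℤ) by omega, Int.natCast_dvd_natCast] at h2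
    have := Nat.le_of_dvd (by omega) h2; omega
  have hαa := int_unit hθ hpa
  rw [show (((a:ℤ) : K)) = (a:K) by push_cast; rfl] at hαa
  obtain ⟨hαO, hαinv, hα0⟩ := hαa
  have hβa := int_unit hθ hpb
  rw [show ((((1:ℤ) - a : ℤ)) : K) = 1 - (a:K) by push_cast; ring] at hβa
  obtain ⟨hβO, hβinv, hβ0⟩ := hβa
  -- exponent congruences mod p
  have powσ : ∀ k : ℕ, (σ ^ k) θ = θ ^ (r ^ k) := by
    intro k; induction k with
    | zero => simp
    | succ k ih =>
      rw [pow_succ, AlgEquiv.mul_apply, hσ, map_pow, ih, ← pow_mul, ← pow_succ]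
  have hrka : (p:ℤ) ∣ ((r:ℤ)^ka - (a:ℤ)) := by
    have h1 : θ ^ (r ^ ka) = θ ^ a := by rw [← powσ ka, ← hka, hσa]
    have h2 : θ ^ (((r:ℤ)^ka) - (a:ℤ)) = 1 := by
      rw [zpow_sub₀ hθ0, show ((r:ℤ)^ka) = ((r^ka : ℕ) : ℤ) by push_cast; rfl,
        zpow_natCast, zpow_natCast, h1, div_self (pow_ne_zero _ hθ0)]
    exact_mod_cast (hθ.zpow_eq_one_iff_dvd _).1 h2
  have hrla : (p:ℤ) ∣ ((r:ℤ)^la - ((1:ℤ) - a)) := by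
    have h1 : θ ^ ((r ^ la : ℕ) : ℤ) = θ ^ ((1:ℤ) - a) := by
      rw [zpow_natCast, ← powσ la, ← hlb, hσb]
    have h2 : θ ^ (((r:ℤ)^la) - ((1:ℤ) - a)) = 1 := by
      rw [zpow_sub₀ hθ0, show ((r:ℤ)^la) = ((r^la : ℕ) : ℤ) by push_cast; rfl, h1,
        div_self (zpow_ne_zero _ hθ0)]
    exact_mod_cast (hθ.zpow_eq_one_iff_dvd _).1 h2
  -- basic memberships
  have hWO : W ∈ RO p K := W_mem hp5 hω hω1
  have hWinvO : W⁻¹ ∈ RO p K := W_inv_mem hp5 hω hω1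
  have hrO : ((r:ℕ):K) ∈ RO p K := natCast_mem (RO p K) r
  have hWr : W - (r:K) ∈ Pp p K θ 1 := W_sub_r hθ hp5 hω hω1 hωr
  have cWa : W ^ (ka:ℕ) - (a:K) ∈ Pp p K θ 1 := by
    have s1 := c_pow hWO hrO hWr ka
    have s3 := intP1 hθ _ hrka
    rw [show ((((r:ℤ)^ka - (a:ℤ)) : ℤ) : K) = (r:K)^ka - (a:K) by push_cast; ring] at s3
    have := add_mem s1 s3
    simpa using this
  have cWb : W ^ (la:ℕ) - (1 - (a:K)) ∈ Pp p K θ 1 := by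
    have s1 := c_pow hWO hrO hWr la
    have s3 := intP1 hθ _ hrla
    rw [show ((((r:ℤ)^la - ((1:ℤ) - a)) : ℤ) : K) = (r:K)^la - (1 - (a:K)) by push_cast; ring] at s3
    have := add_mem s1 s3
    simpa using this
  -- Galois congruences for c
  have hσacO : σa c ∈ RO p K := tau_mem_O σa hc
  have hσbcO : σb c ∈ RO p K := tau_mem_O σb hc
  have hca : σa c - c ∈ Pp p K θ 1 :=
    tauCongr hθ hp5 hgen σa (by rw [hσa]; exact thetaPowSub hθ a (by omega)) hc
  have hθpow : θ ^ ((1:ℤ) - a) = θ ^ ((p + 1 - a : ℕ)) := by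
    have hθp : θ ^ (p:ℤ) = 1 := by rw [zpow_natCast, hθ.pow_eq_one]
    have hc1 : ((p + 1 - a : ℕ) : ℤ) = (1 - a) + p := by omega
    rw [← zpow_natCast θ (p + 1 - a), hc1, zpow_add₀ hθ0, hθp, mul_one]
  have hcb : σb c - c ∈ Pp p K θ 1 :=
    tauCongr hθ hp5 hgen σb (by rw [hσb, hθpow]; exact thetaPowSub hθ _ (by omega)) hc
  -- power memberships and nonvanishing
  have hWkaO : W ^ (ka:ℕ) ∈ RO p K := pow_mem hWO ka
  have hWlaO : W ^ (la:ℕ) ∈ RO p K := pow_mem hWO la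
  have hWkainv : (W ^ (ka:ℕ))⁻¹ ∈ RO p K := by rw [← inv_pow]; exact pow_mem hWinvO ka
  have hWlainv : (W ^ (la:ℕ))⁻¹ ∈ RO p K := by rw [← inv_pow]; exact pow_mem hWinvO la
  have hWka0 : W ^ (ka:ℕ) ≠ 0 := pow_ne_zero _ hW0
  have hWla0 : W ^ (la:ℕ) ≠ 0 := pow_ne_zero _ hW0
  have hUO : W ^ (ka:ℕ) * W ^ (la:ℕ) ∈ RO p K := mul_mem hWkaO hWlaO
  have hUinv : (W ^ (ka:ℕ) * W ^ (la:ℕ))⁻¹ ∈ RO p K := by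
    rw [mul_inv]; exact mul_mem hWkainv hWlainv
  have hU0 : W ^ (ka:ℕ) * W ^ (la:ℕ) ≠ 0 := mul_ne_zero hWka0 hWla0
  have hABO : (a:K) * (1 - (a:K)) ∈ RO p K := mul_mem hαO hβO
  have hABinv : ((a:K) * (1 - (a:K)))⁻¹ ∈ RO p K := by
    rw [mul_inv]; exact mul_mem hαinv hβinv
  have hAB0 : (a:K) * (1 - (a:K)) ≠ 0 := mul_ne_zero hα0 hβ0
  have cU : W ^ (ka:ℕ) * W ^ (la:ℕ) - ((a:K) * (1 - (a:K))) ∈ Pp p K θ 1 :=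
    c_mul cWa cWb hαO hWlaO
  -- generic zpow congruences
  have gA : ∀ t : ℤ, (W ^ (ka:ℕ)) ^ t - (a:K) ^ t ∈ Pp p K θ 1 := fun t =>
    c_zpow hWkaO hαO hWkainv hαinv hWka0 hα0 cWa t
  have gB : ∀ t : ℤ, (W ^ (la:ℕ)) ^ t - (1 - (a:K)) ^ t ∈ Pp p K θ 1 := fun t =>
    c_zpow hWlaO hβO hWlainv hβinv hWla0 hβ0 cWb t
  have gU : ∀ t : ℤ, (W ^ (ka:ℕ) * W ^ (la:ℕ)) ^ t - ((a:K) * (1 - (a:K))) ^ t ∈ Pp p K θ 1 :=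
    fun t => c_zpow hUO hABO hUinv hABinv hU0 hAB0 cU t
  -- zpow membership shortcuts
  have mA : ∀ t : ℤ, (a:K) ^ t ∈ RO p K := fun t => zpowO_mem hαO hαinv t
  have mB : ∀ t : ℤ, (1 - (a:K)) ^ t ∈ RO p K := fun t => zpowO_mem hβO hβinv t
  have mAB : ∀ t : ℤ, ((a:K) * (1 - (a:K))) ^ t ∈ RO p K := fun t => zpowO_mem hABO hABinv t
  have mWka : ∀ t : ℤ, (W ^ (ka:ℕ)) ^ t ∈ RO p K := fun t => zpowO_mem hWkaO hWkainv t
  have mWla : ∀ t : ℤ, (W ^ (la:ℕ)) ^ t ∈ RO p K := fun t => zpowO_mem hWlaO hWlainv t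
  have mU : ∀ t : ℤ, (W ^ (ka:ℕ) * W ^ (la:ℕ)) ^ t ∈ RO p K := fun t => zpowO_mem hUO hUinv t
  -- exponent rewriting
  have hDa : ∀ t : ℤ, W ^ (2 * (ka:ℤ) * t) = (W ^ (ka:ℕ)) ^ (2*t) := by
    intro t; rw [← zpow_natCast W ka, ← zpow_mul]; congr 1; ring
  have hDb : ∀ t : ℤ, W ^ (2 * (la:ℤ) * t) = (W ^ (la:ℕ)) ^ (2*t) := by
    intro t; rw [← zpow_natCast W la, ← zpow_mul]; congr 1; ring
  have hSa : ∀ t : ℤ, W ^ ((ka:ℤ) * t) = (W ^ (ka:ℕ)) ^ t := by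
    intro t; rw [← zpow_natCast W ka, ← zpow_mul]
  have hSb : ∀ t : ℤ, W ^ ((la:ℤ) * t) = (W ^ (la:ℕ)) ^ t := by
    intro t; rw [← zpow_natCast W la, ← zpow_mul]
  have hKL : ∀ t : ℤ, W ^ (((ka:ℤ) + la) * t) = (W ^ (ka:ℕ) * W ^ (la:ℕ)) ^ t := by
    intro t
    rw [← zpow_natCast W ka, ← zpow_natCast W la, ← zpow_add₀ hW0, ← zpow_mul]
  -- triple product congruences
  have P11 : (W ^ (ka:ℕ)) ^ (2*x) * (W ^ (ka:ℕ) * W ^ (la:ℕ)) ^ y * (W ^ (la:ℕ)) ^ z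
      - (a:K) ^ (2*x) * ((a:K) * (1 - (a:K))) ^ y * (1 - (a:K)) ^ z ∈ Pp p K θ 1 :=
    c_mul (c_mul (gA (2*x)) (gU y) (mA (2*x)) (mU y)) (gB z)
      (mul_mem (mA (2*x)) (mAB y)) (mWla z)
  have P12 : (W ^ (ka:ℕ) * W ^ (la:ℕ)) ^ x * (W ^ (ka:ℕ)) ^ (2*y) * (W ^ (la:ℕ)) ^ z
      - ((a:K) * (1 - (a:K))) ^ x * (a:K) ^ (2*y) * (1 - (a:K)) ^ z ∈ Pp p K θ 1 :=
    c_mul (c_mul (gU x) (gA (2*y)) (mAB x) (mWka (2*y))) (gB z)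
      (mul_mem (mAB x) (mA (2*y))) (mWla z)
  have P21 : (W ^ (ka:ℕ) * W ^ (la:ℕ)) ^ x * (W ^ (la:ℕ)) ^ (2*y) * (W ^ (ka:ℕ)) ^ z
      - ((a:K) * (1 - (a:K))) ^ x * (1 - (a:K)) ^ (2*y) * (a:K) ^ z ∈ Pp p K θ 1 :=
    c_mul (c_mul (gU x) (gB (2*y)) (mAB x) (mWla (2*y))) (gA z)
      (mul_mem (mAB x) (mB (2*y))) (mWka z)
  have P22 : (W ^ (la:ℕ)) ^ (2*x) * (W ^ (ka:ℕ) * W ^ (la:ℕ)) ^ y * (W ^ (ka:ℕ)) ^ z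
      - (1 - (a:K)) ^ (2*x) * ((a:K) * (1 - (a:K))) ^ y * (a:K) ^ z ∈ Pp p K θ 1 :=
    c_mul (c_mul (gB (2*x)) (gU y) (mB (2*x)) (mU y)) (gA z)
      (mul_mem (mB (2*x)) (mAB y)) (mWka z)
  -- rewrite t1 and t2
  have ht1w : t1 x y z = c * σa c *
      ((W ^ (ka:ℕ)) ^ (2*x) * (W ^ (ka:ℕ) * W ^ (la:ℕ)) ^ y * (W ^ (la:ℕ)) ^ z
        - (W ^ (ka:ℕ) * W ^ (la:ℕ)) ^ x * (W ^ (ka:ℕ)) ^ (2*y) * (W ^ (la:ℕ)) ^ z) := by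
    rw [ht1]
    simp only [map_sub, map_mul, map_zpow₀, ← hW, hDa, hKL, hSb]
  have ht2w : t2 x y z = c * σb c *
      (-((W ^ (ka:ℕ) * W ^ (la:ℕ)) ^ x * (W ^ (la:ℕ)) ^ (2*y) * (W ^ (ka:ℕ)) ^ z)
        + (W ^ (la:ℕ)) ^ (2*x) * (W ^ (ka:ℕ) * W ^ (la:ℕ)) ^ y * (W ^ (ka:ℕ)) ^ z) := by
    rw [ht2]
    simp only [map_add, map_neg, map_mul, map_zpow₀, ← hW, hDb, hKL, hSa]
  -- conclude
  refine ⟨parta, ?_, ?_⟩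
  · have expand : t1 x y z - c ^ 2 *
        ((a : K) ^ (2 * x) * ((a : K) * (1 - (a : K))) ^ y * (1 - (a : K)) ^ z
          - ((a : K) * (1 - (a : K))) ^ x * (a : K) ^ (2 * y) * (1 - (a : K)) ^ z)
        = (c * σa c) *
            (((W ^ (ka:ℕ)) ^ (2*x) * (W ^ (ka:ℕ) * W ^ (la:ℕ)) ^ y * (W ^ (la:ℕ)) ^ z
              - (a:K) ^ (2*x) * ((a:K) * (1 - (a:K))) ^ y * (1 - (a:K)) ^ z)
            - ((W ^ (ka:ℕ) * W ^ (la:ℕ)) ^ x * (W ^ (ka:ℕ)) ^ (2*y) * (W ^ (la:ℕ)) ^ z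
              - ((a:K) * (1 - (a:K))) ^ x * (a:K) ^ (2*y) * (1 - (a:K)) ^ z))
          + (σa c - c) * (c *
            ((a : K) ^ (2 * x) * ((a : K) * (1 - (a : K))) ^ y * (1 - (a : K)) ^ z
              - ((a : K) * (1 - (a : K))) ^ x * (a : K) ^ (2 * y) * (1 - (a : K)) ^ z)) := by
      rw [ht1w]; ring
    rw [expand]
    refine add_mem (O_mul_P1 (sub_mem P11 P12) (mul_mem hc hσacO)) (P1_mul_O hca ?_)
    exact mul_mem hc (sub_mem (mul_mem (mul_mem (mA (2*x)) (mAB y)) (mB z))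
      (mul_mem (mul_mem (mAB x) (mA (2*y))) (mB z)))
  · have expand : t2 x y z - c ^ 2 *
        (-(((a : K) * (1 - (a : K))) ^ x * (1 - (a : K)) ^ (2 * y) * (a : K) ^ z)
          + (1 - (a : K)) ^ (2 * x) * ((a : K) * (1 - (a : K))) ^ y * (a : K) ^ z)
        = (c * σb c) *
            (((W ^ (la:ℕ)) ^ (2*x) * (W ^ (ka:ℕ) * W ^ (la:ℕ)) ^ y * (W ^ (ka:ℕ)) ^ z
              - (1 - (a:K)) ^ (2*x) * ((a:K) * (1 - (a:K))) ^ y * (a:K) ^ z)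
            - ((W ^ (ka:ℕ) * W ^ (la:ℕ)) ^ x * (W ^ (la:ℕ)) ^ (2*y) * (W ^ (ka:ℕ)) ^ z
              - ((a:K) * (1 - (a:K))) ^ x * (1 - (a:K)) ^ (2*y) * (a:K) ^ z))
          + (σb c - c) * (c *
            (-(((a : K) * (1 - (a : K))) ^ x * (1 - (a : K)) ^ (2 * y) * (a : K) ^ z)
              + (1 - (a : K)) ^ (2 * x) * ((a : K) * (1 - (a : K))) ^ y * (a : K) ^ z)) := by
      rw [ht2w]; ring
    rw [expand]
    refine add_mem (O_mul_P1 (sub_mem P22 P21) (mul_mem hc hσbcO)) (P1_mul_O hcb ?_)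
    refine mul_mem hc (add_mem (neg_mem ?_) ?_)
    · exact mul_mem (mul_mem (mAB x) (mB (2*y))) (mA z)
    · exact mul_mem (mul_mem (mB (2*x)) (mAB y)) (mA z)
end
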